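/- arXiv:1611.02065 — 9 statements merged into one kernel-verified Lean document; each statement's English description precedes it below -/
import Mathlib

section
/- Let μ be a discrete measure on a finite set X with positive masses λ_i, let {ψ_1,...,ψ_N} be a μ-orthonormal basis of S|_X, V the matrix with entries V_{ik} = ψ_k(x_i), b = V^t λ the vector of μ-moments, and u ≥ 0 a vector with ‖V^t u − b‖_2 = ε. Let (T, w) be the quadrature formula given by the nonzero entries of u. Then for every φ ∈ S, |∑_i λ_i φ(x_i) − ∑_j w_j φ(t_j)| ≤ ε · ‖φ‖_{ℓ²_λ(X)}, where ‖φ‖²_{ℓ²_λ(X)} = ∑_i λ_i φ(x_i)². -/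
/-!
Expand `φ = ∑ₖ γₖ ψₖ`. Both quadrature sums are linear in `φ`, so their difference is
`∑ₖ γₖ (bₖ - (Vᵗu)ₖ)`, and orthonormality gives `‖φ‖²_{ℓ²_λ} = ∑ₖ γₖ²`; Cauchy–Schwarz in the
coefficients finishes the proof.
-/

open Finset

lemma Real.abs_sum_mul_le_sqrt_mul_sqrt {ι : Type*} (s : Finset ι) (f g : ι → ℝ) :
    |∑ i ∈ s, f i * g i| ≤ √(∑ i ∈ s, f i ^ 2) * √(∑ i ∈ s, g i ^ 2) := by
  refine abs_le.2 ⟨?_, Real.sum_mul_le_sqrt_mul_sqrt s f g⟩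
  have h := Real.sum_mul_le_sqrt_mul_sqrt s (-f) g
  simp only [Pi.neg_apply, neg_mul, sum_neg_distrib, neg_sq] at h
  linarith

section Expansion

variable {ι κ : Type*} [Fintype ι] [Fintype κ]

lemma sum_mul_sum_smul_apply (c : ι → ℝ) (γ : κ → ℝ) (ψ : κ → ι → ℝ) :
    ∑ i, c i * (∑ k, γ k • ψ k) i = ∑ k, γ k * ∑ i, c i * ψ k i := by
  simp only [Finset.sum_apply, Pi.smul_apply, smul_eq_mul, mul_sum]
  rw [sum_comm]
  exact sum_congr rfl fun _ _ ↦ sum_congr rfl fun _ _ ↦ by ring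

lemma sum_mul_sq_sum_smul_of_orthonormal [DecidableEq κ] {lam : ι → ℝ} {ψ : κ → ι → ℝ}
    (horth : ∀ j k, ∑ i, lam i * ψ j i * ψ k i = if j = k then 1 else 0) (γ : κ → ℝ) :
    ∑ i, lam i * (∑ k, γ k • ψ k) i ^ 2 = ∑ k, γ k ^ 2 := by
  set φ := ∑ k, γ k • ψ k
  calc ∑ i, lam i * φ i ^ 2 = ∑ i, (lam i * φ i) * φ i := by simp only [sq, mul_assoc]
    _ = ∑ k, γ k * ∑ i, (lam i * ψ k i) * φ i := by
      rw [sum_mul_sum_smul_apply]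
      exact sum_congr rfl fun _ _ ↦ congrArg _ (sum_congr rfl fun _ _ ↦ mul_right_comm _ _ _)
    _ = ∑ k, γ k * ∑ l, γ l * ∑ i, lam i * ψ k i * ψ l i := by
      simp only [φ, sum_mul_sum_smul_apply]
    _ = ∑ k, γ k ^ 2 := by simp [horth, sq]

end Expansion

theorem quadrature_error_residual_general
    (M N : ℕ) (lam : Fin M → ℝ)
    (ψ : Fin N → (Fin M → ℝ))
    (horth : ∀ j k, ∑ i, lam i * ψ j i * ψ k i = if j = k then 1 else 0)
    (u : Fin M → ℝ) (ε : ℝ)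
    (hres : Real.sqrt (∑ k, (∑ i, u i * ψ k i - ∑ i, lam i * ψ k i) ^ 2) = ε) :
    ∀ φ ∈ Submodule.span ℝ (Set.range ψ),
      |∑ i, lam i * φ i - ∑ i, u i * φ i|
        ≤ ε * Real.sqrt (∑ i, lam i * φ i ^ 2) := by
  intro φ hφ
  obtain ⟨γ, rfl⟩ := (Submodule.mem_span_range_iff_exists_fun ℝ).mp hφ
  have herror : ∑ i, lam i * (∑ k, γ k • ψ k) i - ∑ i, u i * (∑ k, γ k • ψ k) i
      = ∑ k, γ k * (∑ i, lam i * ψ k i - ∑ i, u i * ψ k i) := by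
    simp only [sum_mul_sum_smul_apply, ← mul_sub, ← sum_sub_distrib]
  rw [herror, sum_mul_sq_sum_smul_of_orthonormal horth, ← hres, mul_comm]
  convert Real.abs_sum_mul_le_sqrt_mul_sqrt univ γ _ using 4 with k
  rw [sub_sq_comm]

/-- Near-exactness on the space `S`: if `u ≥ 0` has moment residual `ε` with
respect to a `μ`-orthonormal basis `ψ` of `S|_X`, then the quadrature error on
every `φ ∈ S = span ψ` is at most `ε ‖φ‖_{ℓ²_λ(X)}`. -/
theorem quadrature_error_residual
    (M N : ℕ) (lam : Fin M → ℝ) (hlam : ∀ i, 0 < lam i)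
    (ψ : Fin N → (Fin M → ℝ))
    (horth : ∀ j k, ∑ i, lam i * ψ j i * ψ k i = if j = k then 1 else 0)
    (u : Fin M → ℝ) (hu : ∀ i, 0 ≤ u i) (ε : ℝ)
    (hres : Real.sqrt (∑ k, (∑ i, u i * ψ k i - ∑ i, lam i * ψ k i) ^ 2) = ε) :
    ∀ φ ∈ Submodule.span ℝ (Set.range ψ),
      |∑ i, lam i * φ i - ∑ i, u i * φ i|
        ≤ ε * Real.sqrt (∑ i, lam i * φ i ^ 2) :=
  quadrature_error_residual_general M N lam ψ horth u ε hres
end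

section
/- Under the hypotheses of the previous statement, and assuming additionally 1 ∈ S, the sum of the computed weights satisfies ∑_{j=1}^m w_j ≤ μ(X) + ε √(μ(X)), where μ(X) = ∑_i λ_i. -/
/-!
Write `1 = ∑ₖ cₖ ψₖ`. Pairing with `u - λ` turns the excess `∑ uᵢ - ∑ λᵢ` into `∑ₖ cₖ rₖ`, where
`r` is the moment residual, so Cauchy–Schwarz bounds it by `‖c‖ ε`; by orthonormality
`‖c‖² = ‖1‖²_λ = ∑ λᵢ`.
-/

open Finset

section WeightedOrthonormal

variable {ι κ : Type*} [Fintype ι] [Fintype κ]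
  {w : ι → ℝ} {ψ : κ → ι → ℝ}

theorem sum_sq_coeff_eq_weighted_sum_sq [DecidableEq κ]
    (hψ : ∀ j k, ∑ i, w i * ψ j i * ψ k i = if j = k then 1 else 0) (c : κ → ℝ) :
    ∑ k, c k ^ 2 = ∑ i, w i * (∑ k, c k * ψ k i) ^ 2 := by
  calc ∑ k, c k ^ 2
      = ∑ j, ∑ k, c j * c k * ∑ i, w i * ψ j i * ψ k i := by
        simp only [hψ, mul_ite, mul_one, mul_zero, sum_ite_eq, mem_univ, if_true, sq]
    _ = ∑ i, w i * (∑ k, c k * ψ k i) ^ 2 := by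
        simp only [sq, mul_sum, sum_mul]
        rw [sum_comm_cycle]
        exact sum_congr rfl fun i _ => sum_congr rfl fun j _ => sum_congr rfl fun k _ => by ring

theorem sum_mul_sum_coeff_mul (c : κ → ℝ) (v : ι → ℝ) :
    ∑ i, v i * ∑ k, c k * ψ k i = ∑ k, c k * ∑ i, v i * ψ k i := by
  simp only [mul_sum]
  rw [sum_comm]
  exact sum_congr rfl fun k _ => sum_congr rfl fun i _ => by ring

theorem sum_mul_le_sqrt_weighted_sum_sq_mul_sqrt_moments [DecidableEq κ]
    (hψ : ∀ j k, ∑ i, w i * ψ j i * ψ k i = if j = k then 1 else 0)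
    {f : ι → ℝ} (hf : f ∈ Submodule.span ℝ (Set.range ψ)) (v : ι → ℝ) :
    ∑ i, v i * f i ≤
      √(∑ i, w i * f i ^ 2) * √(∑ k, (∑ i, v i * ψ k i) ^ 2) := by
  obtain ⟨c, rfl⟩ := (Submodule.mem_span_range_iff_exists_fun ℝ).1 hf
  simp only [Finset.sum_apply, Pi.smul_apply, smul_eq_mul]
  rw [sum_mul_sum_coeff_mul, ← sum_sq_coeff_eq_weighted_sum_sq hψ]
  exact Real.sum_mul_le_sqrt_mul_sqrt univ c _

end WeightedOrthonormal

theorem catch_weights_sum_residual_general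
    (M N : ℕ) (lam : Fin M → ℝ)
    (ψ : Fin N → (Fin M → ℝ))
    (horth : ∀ j k, ∑ i, lam i * ψ j i * ψ k i = if j = k then 1 else 0)
    (u : Fin M → ℝ) (ε : ℝ)
    (hres : Real.sqrt (∑ k, (∑ i, u i * ψ k i - ∑ i, lam i * ψ k i) ^ 2) = ε)
    (hone : (fun _ => (1 : ℝ)) ∈ Submodule.span ℝ (Set.range ψ)) :
    ∑ i, u i ≤ ∑ i, lam i + ε * Real.sqrt (∑ i, lam i) := by
  have key := sum_mul_le_sqrt_weighted_sum_sq_mul_sqrt_moments horth hone (u - lam)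
  simp only [Pi.sub_apply, sub_mul, sum_sub_distrib, mul_one, one_pow] at key
  rw [hres] at key
  linarith

/-- If moreover the constant function `1` belongs to `S`, the sum of the
computed weights satisfies `∑ w_j ≤ μ(X) + ε √(μ(X))`. -/
theorem catch_weights_sum_residual
    (M N : ℕ) (lam : Fin M → ℝ) (hlam : ∀ i, 0 < lam i)
    (ψ : Fin N → (Fin M → ℝ))
    (horth : ∀ j k, ∑ i, lam i * ψ j i * ψ k i = if j = k then 1 else 0)
    (u : Fin M → ℝ) (hu : ∀ i, 0 ≤ u i) (ε : ℝ)
    (hres : Real.sqrt (∑ k, (∑ i, u i * ψ k i - ∑ i, lam i * ψ k i) ^ 2) = ε)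
    (hone : (fun _ => (1 : ℝ)) ∈ Submodule.span ℝ (Set.range ψ)) :
    ∑ i, u i ≤ ∑ i, lam i + ε * Real.sqrt (∑ i, lam i) :=
  catch_weights_sum_residual_general M N lam ψ horth u ε hres hone
end

section
/- Let μ be a discrete measure on a finite set X with positive masses λ_i, S a finite-dimensional function space on X containing the constants, {ψ_k} a μ-orthonormal basis of S|_X, V its Vandermonde matrix at X, and u ≥ 0 with ‖V^t u − V^t λ‖_2 = ε. Let (T, w) be the quadrature formula from the nonzero entries of u. Then for every function f on X: |∑_i λ_i f(x_i) − ∑_j w_j f(t_j)| ≤ 2(μ(X) + ε√(μ(X))) · E_S(f; X) + ε ‖f‖_{ℓ²_λ(X)}, where E_S(f;X) = min_{φ∈S} max_{x∈X} |f(x) − φ(x)|. -/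
/-!
Write `φ ∈ S` as `∑ₖ aₖ ψₖ`. Orthonormality gives `‖φ‖_{ℓ²_λ} = |a|₂` and the residual pairs with the
coefficients, `∑ uφ - ∑ λφ = ∑ₖ aₖ rₖ` with `rₖ = ∑ uψₖ - ∑ λψₖ`, so Cauchy–Schwarz bounds the error on `S` by `ε ‖φ‖_{ℓ²_λ}`.
Applied to `φ = 1` this bounds the total mass `∑ u ≤ μ(X) + ε √μ(X)`. For arbitrary `f`, split
`f = (f - φ) + φ`: positivity of `λ` and `u` makes the first part cost at most `(μ(X) + ∑ u) ‖f - φ‖_∞`,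
and the second costs `ε ‖φ‖_{ℓ²_λ} ≤ ε (‖f‖_{ℓ²_λ} + √μ(X) ‖f - φ‖_∞)`; then minimise over `φ`.
-/

open Finset Real

section WeightedSums

variable {ι : Type*} [Fintype ι]

theorem abs_sum_mul_le_sqrt_mul_sqrt (a b : ι → ℝ) :
    |∑ i, a i * b i| ≤ √(∑ i, a i ^ 2) * √(∑ i, b i ^ 2) := by
  rw [← sqrt_sq_eq_abs, ← sqrt_mul (sum_nonneg fun i _ => sq_nonneg _)]
  exact sqrt_le_sqrt (sum_mul_sq_le_sq_mul_sq _ _ _)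

theorem sqrt_sum_mul_sq_eq_norm {w : ι → ℝ} (hw : ∀ i, 0 ≤ w i) (a : ι → ℝ) :
    √(∑ i, w i * a i ^ 2) = ‖(WithLp.toLp 2 fun i => √(w i) * a i : EuclideanSpace ℝ ι)‖ := by
  simp [EuclideanSpace.norm_eq, mul_pow, sq_sqrt (hw _)]

theorem sqrt_sum_mul_add_sq_le {w : ι → ℝ} (hw : ∀ i, 0 ≤ w i) (a b : ι → ℝ) :
    √(∑ i, w i * (a i + b i) ^ 2) ≤ √(∑ i, w i * a i ^ 2) + √(∑ i, w i * b i ^ 2) := by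
  simp only [sqrt_sum_mul_sq_eq_norm hw, mul_add]
  exact norm_add_le (WithLp.toLp 2 fun i => √(w i) * a i : EuclideanSpace ℝ ι)
    (WithLp.toLp 2 fun i => √(w i) * b i)

theorem sqrt_sum_mul_sq_le_of_abs_le {w b : ι → ℝ} {G : ℝ} (hw : ∀ i, 0 ≤ w i)
    (hb : ∀ i, |b i| ≤ G) (hG : 0 ≤ G) :
    √(∑ i, w i * b i ^ 2) ≤ √(∑ i, w i) * G := by
  rw [← sqrt_sq hG, ← sqrt_mul (sum_nonneg fun i _ => hw i), sum_mul]
  exact sqrt_le_sqrt <| sum_le_sum fun i _ =>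
    mul_le_mul_of_nonneg_left (sq_le_sq' (abs_le.1 (hb i)).1 (abs_le.1 (hb i)).2) (hw i)

theorem abs_sum_mul_le_sum_mul_of_abs_le {c b : ι → ℝ} {G : ℝ} (hc : ∀ i, 0 ≤ c i)
    (hb : ∀ i, |b i| ≤ G) :
    |∑ i, c i * b i| ≤ (∑ i, c i) * G := by
  rw [sum_mul]
  refine (abs_sum_le_sum_abs _ _).trans (sum_le_sum fun i _ => ?_)
  rw [abs_mul, abs_of_nonneg (hc i)]
  exact mul_le_mul_of_nonneg_left (hb i) (hc i)

end WeightedSums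

section Orthonormal

variable {ι κ : Type*} {w : ι → ℝ} {ψ : κ → ι → ℝ}

theorem sum_mul_sq_linearCombination_of_orthonormal [Fintype ι] [Fintype κ] [DecidableEq κ]
    (horth : ∀ j k, ∑ i, w i * ψ j i * ψ k i = if j = k then 1 else 0) (a : κ → ℝ) :
    ∑ i, w i * (∑ k, a k * ψ k i) ^ 2 = ∑ k, a k ^ 2 := by
  calc ∑ i, w i * (∑ k, a k * ψ k i) ^ 2
      = ∑ j, ∑ k, a j * a k * ∑ i, w i * ψ j i * ψ k i := by
        simp only [sq, sum_mul_sum]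
        simp only [mul_sum]
        rw [sum_comm]
        refine sum_congr rfl fun j _ => ?_
        rw [sum_comm]
        exact sum_congr rfl fun k _ => sum_congr rfl fun i _ => by ring
    _ = ∑ k, a k ^ 2 := by simp [horth, sq]

theorem mem_span_range_iff_exists_sum_mul [Fintype κ] {φ : ι → ℝ} :
    φ ∈ Submodule.span ℝ (Set.range ψ) ↔ ∃ a : κ → ℝ, φ = fun i => ∑ k, a k * ψ k i := by
  simp [Submodule.mem_span_range_iff_exists_fun, funext_iff, Finset.sum_apply, eq_comm]

end Orthonormal

section NearExactQuadrature

variable {ι κ : Type*} [Fintype ι] [Fintype κ] [DecidableEq κ] {w u : ι → ℝ}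
  {ψ : κ → ι → ℝ} {ε : ℝ}

theorem abs_sum_sub_le_of_mem_span
    (horth : ∀ j k, ∑ i, w i * ψ j i * ψ k i = if j = k then 1 else 0)
    (hres : √(∑ k, (∑ i, u i * ψ k i - ∑ i, w i * ψ k i) ^ 2) = ε)
    {φ : ι → ℝ} (hφ : φ ∈ Submodule.span ℝ (Set.range ψ)) :
    |∑ i, u i * φ i - ∑ i, w i * φ i| ≤ ε * √(∑ i, w i * φ i ^ 2) := by
  obtain ⟨a, rfl⟩ := mem_span_range_iff_exists_sum_mul.1 hφ
  have hpair : ∀ v : ι → ℝ, ∑ i, v i * ∑ k, a k * ψ k i = ∑ k, a k * ∑ i, v i * ψ k i := by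
    intro v
    simp only [mul_sum]
    exact sum_comm.trans (sum_congr rfl fun k _ => sum_congr rfl fun i _ => by ring)
  rw [hpair, hpair, ← sum_sub_distrib, sum_mul_sq_linearCombination_of_orthonormal horth,
    ← hres, mul_comm]
  simpa only [mul_sub] using
    abs_sum_mul_le_sqrt_mul_sqrt a fun k => ∑ i, u i * ψ k i - ∑ i, w i * ψ k i

theorem sum_le_of_one_mem_span
    (horth : ∀ j k, ∑ i, w i * ψ j i * ψ k i = if j = k then 1 else 0)
    (hone : (fun _ => (1 : ℝ)) ∈ Submodule.span ℝ (Set.range ψ))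
    (hres : √(∑ k, (∑ i, u i * ψ k i - ∑ i, w i * ψ k i) ^ 2) = ε) :
    ∑ i, u i ≤ ∑ i, w i + ε * √(∑ i, w i) := by
  have h := abs_sum_sub_le_of_mem_span horth hres hone
  simp only [mul_one, one_pow] at h
  linarith [le_abs_self (∑ i, u i - ∑ i, w i)]

theorem abs_quadrature_error_le_of_abs_sub_le (hw : ∀ i, 0 ≤ w i) (hu : ∀ i, 0 ≤ u i)
    (horth : ∀ j k, ∑ i, w i * ψ j i * ψ k i = if j = k then 1 else 0)
    (hone : (fun _ => (1 : ℝ)) ∈ Submodule.span ℝ (Set.range ψ))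
    (hres : √(∑ k, (∑ i, u i * ψ k i - ∑ i, w i * ψ k i) ^ 2) = ε)
    {f φ : ι → ℝ} (hφ : φ ∈ Submodule.span ℝ (Set.range ψ)) {G : ℝ}
    (hG : ∀ i, |f i - φ i| ≤ G) (hG₀ : 0 ≤ G) :
    |∑ i, w i * f i - ∑ i, u i * f i|
      ≤ 2 * (∑ i, w i + ε * √(∑ i, w i)) * G + ε * √(∑ i, w i * f i ^ 2) := by
  have hε : 0 ≤ ε := hres ▸ sqrt_nonneg _
  have hsplit : ∑ i, w i * f i - ∑ i, u i * f i = ∑ i, w i * (f i - φ i)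
      - ∑ i, u i * (f i - φ i) - (∑ i, u i * φ i - ∑ i, w i * φ i) := by
    simp only [mul_sub, sum_sub_distrib]
    ring
  have hw_err := abs_sum_mul_le_sum_mul_of_abs_le hw hG
  have hu_err := abs_sum_mul_le_sum_mul_of_abs_le hu hG
  have hmass := mul_le_mul_of_nonneg_right (sum_le_of_one_mem_span horth hone hres) hG₀
  have hφ_norm : √(∑ i, w i * φ i ^ 2) ≤ √(∑ i, w i * f i ^ 2) + √(∑ i, w i) * G := by
    have hφ_sub : ∀ i, |φ i - f i| ≤ G := fun i => abs_sub_comm (f i) (φ i) ▸ hG i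
    have := sqrt_sum_mul_add_sq_le hw f (φ - f)
    simp only [Pi.sub_apply, add_sub_cancel] at this
    linarith [sqrt_sum_mul_sq_le_of_abs_le hw hφ_sub hG₀]
  have hmoment := (abs_sum_sub_le_of_mem_span horth hres hφ).trans
    (mul_le_mul_of_nonneg_left hφ_norm hε)
  rw [hsplit]
  linarith [abs_sub (∑ i, w i * (f i - φ i) - ∑ i, u i * (f i - φ i))
    (∑ i, u i * φ i - ∑ i, w i * φ i), abs_sub (∑ i, w i * (f i - φ i)) (∑ i, u i * (f i - φ i))]

end NearExactQuadrature

/-- Proposition 1: error of a near-exact positive quadrature formula on an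
arbitrary function `f`, in terms of the best uniform approximation error
`E_S(f;X)` from `S` and the moment residual `ε`. -/
theorem near_exact_quadrature_error
    (M N : ℕ) (hM : 0 < M) (lam : Fin M → ℝ) (hlam : ∀ i, 0 < lam i)
    (ψ : Fin N → (Fin M → ℝ))
    (horth : ∀ j k, ∑ i, lam i * ψ j i * ψ k i = if j = k then 1 else 0)
    (hone : (fun _ => (1 : ℝ)) ∈ Submodule.span ℝ (Set.range ψ))
    (u : Fin M → ℝ) (hu : ∀ i, 0 ≤ u i) (ε : ℝ)
    (hres : Real.sqrt (∑ k, (∑ i, u i * ψ k i - ∑ i, lam i * ψ k i) ^ 2) = ε)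
    (f : Fin M → ℝ) :
    |∑ i, lam i * f i - ∑ i, u i * f i|
      ≤ 2 * (∑ i, lam i + ε * Real.sqrt (∑ i, lam i)) *
          (⨅ φ : Submodule.span ℝ (Set.range ψ),
            Finset.univ.sup' ⟨⟨0, hM⟩, Finset.mem_univ _⟩
              (fun i => |f i - (φ : Fin M → ℝ) i|))
        + ε * Real.sqrt (∑ i, lam i * f i ^ 2) := by
  have hε : 0 ≤ ε := hres ▸ sqrt_nonneg _
  have hC : 0 ≤ 2 * (∑ i, lam i + ε * √(∑ i, lam i)) := mul_nonneg zero_le_two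
    (add_nonneg (sum_nonneg fun i _ => (hlam i).le) (mul_nonneg hε (sqrt_nonneg _)))
  rw [mul_iInf_of_nonneg hC, ← sub_le_iff_le_add]
  refine le_ciInf fun φ => sub_le_iff_le_add.2 ?_
  have hG : ∀ i, |f i - (φ : Fin M → ℝ) i|
      ≤ univ.sup' ⟨⟨0, hM⟩, mem_univ _⟩ fun i => |f i - (φ : Fin M → ℝ) i| :=
    fun i => le_sup' (fun i => |f i - (φ : Fin M → ℝ) i|) (mem_univ i)
  exact abs_quadrature_error_le_of_abs_sub_le (fun i => (hlam i).le) hu horth hone hres φ.2 hG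
    ((abs_nonneg _).trans (hG ⟨0, hM⟩))
end

section
/- Let X ⊂ K finite with M points, and (T_{2n}, w) a positive quadrature formula on X exact for polynomials of degree ≤ 2n (counting measure). Let ℒ_n^c f be the weighted least-squares polynomial of degree ≤ n minimizing ∑_j w_j (f(t_j) − p(t_j))². Then ‖f − ℒ_n^c f‖_{ℓ²(X)} ≤ 2√M · E_n(f), i.e., the compressed RMSE on X is at most 2 E_n(f). -/
open MvPolynomial

/-- Compressed least squares (CATCHLS) RMSE estimate: if `(T_{2n}, w)` is a
positive formula on `X` exact at degree `2n` for the counting measure, and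
`p₀` is the weighted least-squares polynomial of degree at most `n` for `f`
at the CATCH points, then `‖f − p₀‖_{ℓ²(X)} ≤ 2√M · E` for every uniform
error bound `E` on `K` achieved by a polynomial of degree at most `n`. -/
theorem catchls_rmse_bound
    (d n M m : ℕ) (K : Set (Fin d → ℝ))
    (x : Fin M → (Fin d → ℝ)) (hx : ∀ i, x i ∈ K)
    (t : Fin m → (Fin d → ℝ)) (ht : ∀ j, ∃ i, t j = x i)
    (w : Fin m → ℝ) (hw : ∀ j, 0 < w j)
    (hexact : ∀ q : MvPolynomial (Fin d) ℝ, q.totalDegree ≤ 2 * n →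
      ∑ i, eval (x i) q = ∑ j, w j * eval (t j) q)
    (f : (Fin d → ℝ) → ℝ)
    (p₀ : MvPolynomial (Fin d) ℝ) (hp₀ : p₀.totalDegree ≤ n)
    (hmin : ∀ q : MvPolynomial (Fin d) ℝ, q.totalDegree ≤ n →
      ∑ j, w j * (f (t j) - eval (t j) p₀) ^ 2
        ≤ ∑ j, w j * (f (t j) - eval (t j) q) ^ 2)
    (E : ℝ) (p : MvPolynomial (Fin d) ℝ) (hp : p.totalDegree ≤ n)
    (hE : ∀ y ∈ K, |f y - eval y p| ≤ E) :
    Real.sqrt (∑ i, (f (x i) - eval (x i) p₀) ^ 2)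
      ≤ 2 * Real.sqrt M * E := by
  classical
  -- trivial case M = 0
  rcases Nat.eq_zero_or_pos M with hM | hM
  · subst hM
    simp
  have hE0 : 0 ≤ E := by
    have i0 : Fin M := ⟨0, hM⟩
    exact (abs_nonneg _).trans (hE _ (hx i0))
  -- t j ∈ K
  have htK : ∀ j, t j ∈ K := fun j => by obtain ⟨i, hi⟩ := ht j; rw [hi]; exact hx i
  -- ∑ w = M
  have hsumw : ∑ j, w j = (M : ℝ) := by
    have h1 := hexact 1 (by simp)
    simpa using h1.symm
  -- notation
  set a : Fin m → ℝ := fun j => f (t j) - eval (t j) p₀ with ha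
  set c : Fin m → ℝ := fun j => f (t j) - eval (t j) p with hc
  -- orthogonality: for r of degree ≤ n, ∑ w a (eval r) = 0
  have horth : ∀ r : MvPolynomial (Fin d) ℝ, r.totalDegree ≤ n →
      ∑ j, w j * (a j * eval (t j) r) = 0 := by
    intro r hr
    set I : ℝ := ∑ j, w j * (a j * eval (t j) r) with hI
    set N : ℝ := ∑ j, w j * (eval (t j) r) ^ 2 with hN
    have hN0 : 0 ≤ N :=
      Finset.sum_nonneg fun j _ => mul_nonneg (hw j).le (sq_nonneg _)
    have key : ∀ s : ℝ, 0 ≤ -(2 * s * I) + s ^ 2 * N := by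
      intro s
      have hdeg : (p₀ + s • r).totalDegree ≤ n :=
        (totalDegree_add _ _).trans (max_le hp₀ ((totalDegree_smul_le _ _).trans hr))
      have h := hmin (p₀ + s • r) hdeg
      have expand : ∑ j, w j * (f (t j) - eval (t j) (p₀ + s • r)) ^ 2
          = ∑ j, w j * a j ^ 2 + (-(2 * s * I) + s ^ 2 * N) := by
        calc ∑ j, w j * (f (t j) - eval (t j) (p₀ + s • r)) ^ 2
            = ∑ j, (w j * a j ^ 2 + (-(2 * s * (w j * (a j * eval (t j) r)))
                + s ^ 2 * (w j * (eval (t j) r) ^ 2))) := by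
              refine Finset.sum_congr rfl fun j _ => ?_
              simp only [map_add, smul_eval, ha]
              ring
          _ = ∑ j, w j * a j ^ 2 + (-(2 * s * I) + s ^ 2 * N) := by
              rw [Finset.sum_add_distrib, Finset.sum_add_distrib, hI, hN,
                Finset.sum_neg_distrib, ← Finset.mul_sum, ← Finset.mul_sum]
      rw [expand] at h
      linarith
    set s : ℝ := I / (N + 1) with hsdef
    have hN1 : (0:ℝ) < N + 1 := by linarith
    have hIs : I = s * (N + 1) := by rw [hsdef, div_mul_cancel₀ _ hN1.ne']
    have := key s
    rw [hIs] at this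
    have hs0 : s = 0 := by nlinarith [sq_nonneg s]
    rw [hIs, hs0, zero_mul]
  -- ∑ w c² ≤ M E²
  have hwc : ∑ j, w j * c j ^ 2 ≤ (M : ℝ) * E ^ 2 := by
    calc ∑ j, w j * c j ^ 2 ≤ ∑ j, w j * E ^ 2 := by
          refine Finset.sum_le_sum fun j _ => ?_
          refine mul_le_mul_of_nonneg_left ?_ (hw j).le
          have := hE _ (htK j)
          calc c j ^ 2 = |c j| ^ 2 := (sq_abs _).symm
            _ ≤ E ^ 2 := by
              exact pow_le_pow_left₀ (abs_nonneg _) this 2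
      _ = (M : ℝ) * E ^ 2 := by rw [← Finset.sum_mul, hsumw]
  -- S := weighted norm² of p - p₀ controlled by weighted norm² of c
  set r₁ : MvPolynomial (Fin d) ℝ := p - p₀ with hr₁
  have hr₁deg : r₁.totalDegree ≤ n := by
    rw [hr₁, sub_eq_add_neg]
    exact (totalDegree_add _ _).trans (max_le hp (by rw [totalDegree_neg]; exact hp₀))
  set b : Fin m → ℝ := fun j => eval (t j) r₁ with hb
  set S : ℝ := ∑ j, w j * b j ^ 2 with hS
  have hS0 : 0 ≤ S := Finset.sum_nonneg fun j _ => mul_nonneg (hw j).le (sq_nonneg _)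
  have hC : 0 ≤ ∑ j, w j * c j ^ 2 :=
    Finset.sum_nonneg fun j _ => mul_nonneg (hw j).le (sq_nonneg _)
  have hSle : S ≤ Real.sqrt (∑ j, w j * c j ^ 2) * Real.sqrt S := by
    have hbac : ∀ j, b j = a j - c j := by
      intro j; simp only [hb, hr₁, ha, hc, map_sub]; ring
    have hSeq : S = ∑ j, w j * (a j * b j) - ∑ j, w j * (c j * b j) := by
      rw [hS, ← Finset.sum_sub_distrib]
      refine Finset.sum_congr rfl fun j _ => ?_
      rw [hbac j]; ring
    have hSeq2 : S = - ∑ j, w j * (c j * b j) := by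
      rw [hSeq, horth r₁ hr₁deg]; ring
    have cs := Real.sum_mul_le_sqrt_mul_sqrt Finset.univ
      (fun j => Real.sqrt (w j) * (- c j)) (fun j => Real.sqrt (w j) * b j)
    have e1 : ∑ j, (Real.sqrt (w j) * (- c j)) * (Real.sqrt (w j) * b j)
        = - ∑ j, w j * (c j * b j) := by
      rw [← Finset.sum_neg_distrib]
      refine Finset.sum_congr rfl fun j _ => ?_
      have hss : Real.sqrt (w j) * Real.sqrt (w j) = w j :=
        Real.mul_self_sqrt (hw j).le
      linear_combination (-(c j * b j)) * hss
    have e2 : ∑ j, (Real.sqrt (w j) * (- c j)) ^ 2 = ∑ j, w j * c j ^ 2 := by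
      refine Finset.sum_congr rfl fun j _ => ?_
      rw [mul_pow, Real.sq_sqrt (hw j).le]; ring
    have e3 : ∑ j, (Real.sqrt (w j) * b j) ^ 2 = S := by
      rw [hS]
      refine Finset.sum_congr rfl fun j _ => ?_
      rw [mul_pow, Real.sq_sqrt (hw j).le]
    rw [e1, e2, e3] at cs
    linarith [hSeq2, cs]
  have hsqrtS : Real.sqrt S ≤ Real.sqrt ((M : ℝ) * E ^ 2) := by
    have h1 : Real.sqrt S * Real.sqrt S ≤ Real.sqrt (∑ j, w j * c j ^ 2) * Real.sqrt S := by
      rw [Real.mul_self_sqrt hS0]; exact hSle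
    rcases eq_or_lt_of_le (Real.sqrt_nonneg S) with h0 | h0
    · rw [← h0]; exact Real.sqrt_nonneg _
    · have h2 : Real.sqrt S ≤ Real.sqrt (∑ j, w j * c j ^ 2) :=
        le_of_mul_le_mul_right h1 h0
      exact h2.trans (Real.sqrt_le_sqrt hwc)
  -- exactness for r₁²
  have hex2 : ∑ i, (eval (x i) r₁) ^ 2 = S := by
    have hdeg : (r₁ ^ 2).totalDegree ≤ 2 * n := by
      calc (r₁ ^ 2).totalDegree ≤ 2 * r₁.totalDegree := totalDegree_pow _ _
        _ ≤ 2 * n := by omega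
    have := hexact (r₁ ^ 2) hdeg
    simpa [map_pow, hS, hb] using this
  -- triangle inequality in ℓ²(X)
  set A : ℝ := ∑ i, (f (x i) - eval (x i) p₀) ^ 2 with hA
  set B : ℝ := ∑ i, (f (x i) - eval (x i) p) ^ 2 with hB
  set Cx : ℝ := ∑ i, (eval (x i) r₁) ^ 2 with hCx
  have hB0 : 0 ≤ B := Finset.sum_nonneg fun i _ => sq_nonneg _
  have hCx0 : 0 ≤ Cx := Finset.sum_nonneg fun i _ => sq_nonneg _
  have hBle : B ≤ (M : ℝ) * E ^ 2 := by
    calc B ≤ ∑ i : Fin M, E ^ 2 := by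
          refine Finset.sum_le_sum fun i _ => ?_
          have := hE _ (hx i)
          calc (f (x i) - eval (x i) p) ^ 2 = |f (x i) - eval (x i) p| ^ 2 := (sq_abs _).symm
            _ ≤ E ^ 2 := pow_le_pow_left₀ (abs_nonneg _) this 2
      _ = (M : ℝ) * E ^ 2 := by simp [mul_comm]
  have tri : Real.sqrt A ≤ Real.sqrt B + Real.sqrt Cx := by
    have cross : ∑ i, (f (x i) - eval (x i) p) * eval (x i) r₁
        ≤ Real.sqrt B * Real.sqrt Cx := Real.sum_mul_le_sqrt_mul_sqrt _ _ _
    have hAexp : A = B + 2 * (∑ i, (f (x i) - eval (x i) p) * eval (x i) r₁) + Cx := by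
      calc A = ∑ i, ((f (x i) - eval (x i) p) ^ 2
            + 2 * ((f (x i) - eval (x i) p) * eval (x i) r₁) + (eval (x i) r₁) ^ 2) := by
            refine Finset.sum_congr rfl fun i _ => ?_
            simp only [hr₁, map_sub]
            ring
        _ = B + 2 * (∑ i, (f (x i) - eval (x i) p) * eval (x i) r₁) + Cx := by
            rw [Finset.sum_add_distrib, Finset.sum_add_distrib, hB, hCx, ← Finset.mul_sum]
    have hAle : A ≤ (Real.sqrt B + Real.sqrt Cx) ^ 2 := by
      have hBs : Real.sqrt B ^ 2 = B := Real.sq_sqrt hB0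
      have hCs : Real.sqrt Cx ^ 2 = Cx := Real.sq_sqrt hCx0
      nlinarith [cross, hAexp]
    calc Real.sqrt A ≤ Real.sqrt ((Real.sqrt B + Real.sqrt Cx) ^ 2) := Real.sqrt_le_sqrt hAle
      _ = Real.sqrt B + Real.sqrt Cx := Real.sqrt_sq (by positivity)
  have hME : Real.sqrt ((M : ℝ) * E ^ 2) = Real.sqrt M * E := by
    rw [Real.sqrt_mul (Nat.cast_nonneg M), Real.sqrt_sq hE0]
  calc Real.sqrt A ≤ Real.sqrt B + Real.sqrt Cx := tri
    _ ≤ Real.sqrt ((M : ℝ) * E ^ 2) + Real.sqrt ((M : ℝ) * E ^ 2) := by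
        have h1 : Real.sqrt B ≤ Real.sqrt ((M : ℝ) * E ^ 2) := Real.sqrt_le_sqrt hBle
        have h2 : Real.sqrt Cx ≤ Real.sqrt ((M : ℝ) * E ^ 2) := by
          rw [hex2]; exact hsqrtS
        linarith
    _ = 2 * Real.sqrt M * E := by rw [hME]; ring
end

section
/- Let X be a finite set of M points, V the Vandermonde matrix at X of an orthonormal basis (for the counting measure) of P_{2n}^d(X), u ≥ 0 with ‖V^t u − V^t 𝟙‖_2 = ε and ε√M < 1, and (T_{2n}, w) the formula from the nonzero entries of u. Then for every polynomial p of degree ≤ n: ‖p‖_{ℓ²(X)} ≤ (1 − ε√M)^{−1/2} ‖p‖_{ℓ²_w(T_{2n})}. -/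
/-!
Write `p² = ∑ₖ cₖ ψₖ` on `X`, which is possible since `deg p² ≤ 2n`. Swapping the sums, the quadrature
error on `p²` is `∑ᵢ (uᵢ - 1) p(xᵢ)² = ∑ₖ cₖ ((Vᵗu)ₖ - (Vᵗ𝟙)ₖ)`, so by Cauchy–Schwarz and Parseval it is at
most `ε ‖c‖₂ = ε ‖p²‖_{ℓ²(X)} ≤ ε √M ‖p‖²_{ℓ²(X)}`. Hence `(1 - ε√M) ‖p‖²_{ℓ²(X)} ≤ ‖p‖²_{ℓ²_w}`.
-/

open MvPolynomial Finset

section OrthonormalExpansion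

variable {ι κ : Type*} [Fintype ι] [Fintype κ] {ψ : κ → ι → ℝ}

theorem sum_sq_sum_mul_eq_sum_sq_of_orthonormal [DecidableEq κ]
    (horth : ∀ j k, ∑ i, ψ j i * ψ k i = if j = k then 1 else 0) (c : κ → ℝ) :
    ∑ i, (∑ k, c k * ψ k i) ^ 2 = ∑ k, c k ^ 2 := by
  calc ∑ i, (∑ k, c k * ψ k i) ^ 2
      = ∑ j, ∑ k, c j * c k * ∑ i, ψ j i * ψ k i := by
        simp_rw [sq, sum_mul_sum, mul_sum]
        rw [sum_comm]
        refine sum_congr rfl fun j _ => ?_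
        rw [sum_comm]
        exact sum_congr rfl fun k _ => sum_congr rfl fun i _ => by ring
    _ = ∑ k, c k ^ 2 := by simp [horth, sq]

theorem sum_mul_sum_mul_sub_sum_sum_mul (u : ι → ℝ) (c : κ → ℝ) :
    ∑ i, u i * ∑ k, c k * ψ k i - ∑ i, ∑ k, c k * ψ k i
      = ∑ k, c k * (∑ i, u i * ψ k i - ∑ i, ψ k i) := by
  simp only [mul_sub, mul_sum, ← sum_sub_distrib]
  rw [sum_comm]
  exact sum_congr rfl fun k _ => sum_congr rfl fun i _ => by ring

theorem abs_sum_mul_sub_sum_le_of_orthonormal [DecidableEq κ]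
    (horth : ∀ j k, ∑ i, ψ j i * ψ k i = if j = k then 1 else 0)
    {f : ι → ℝ} {c : κ → ℝ} (hf : ∀ i, f i = ∑ k, c k * ψ k i) (u : ι → ℝ) :
    |∑ i, u i * f i - ∑ i, f i|
      ≤ √(∑ i, f i ^ 2) * √(∑ k, (∑ i, u i * ψ k i - ∑ i, ψ k i) ^ 2) := by
  have hf' : f = fun i => ∑ k, c k * ψ k i := funext hf
  subst hf'
  rw [sum_mul_sum_mul_sub_sum_sum_mul, sum_sq_sum_mul_eq_sum_sq_of_orthonormal horth,
    ← Real.sqrt_mul (sum_nonneg fun k _ => sq_nonneg (c k))]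
  exact Real.abs_le_sqrt (sum_mul_sq_le_sq_mul_sq _ _ _)

end OrthonormalExpansion

theorem sqrt_sum_sq_le_sqrt_card_mul_sum {ι : Type*} [Fintype ι] {f : ι → ℝ}
    (hf : ∀ i, 0 ≤ f i) : √(∑ i, f i ^ 2) ≤ √(Fintype.card ι) * ∑ i, f i := by
  cases isEmpty_or_nonempty ι
  · simp
  have hcard : 1 ≤ √(Fintype.card ι : ℝ) :=
    Real.one_le_sqrt.mpr (by exact_mod_cast Fintype.card_pos)
  calc √(∑ i, f i ^ 2) ≤ ∑ i, f i :=
        (Real.sqrt_le_left (sum_nonneg fun i _ => hf i)).mpr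
          (sum_sq_le_sq_sum_of_nonneg fun i _ => hf i)
    _ ≤ √(Fintype.card ι) * ∑ i, f i :=
        le_mul_of_one_le_left (sum_nonneg fun i _ => hf i) hcard

theorem sqrt_le_sqrt_inv_one_sub_mul_sqrt {S Q δ : ℝ} (hδ : δ < 1)
    (h : (1 - δ) * S ≤ Q) : √S ≤ √(1 - δ)⁻¹ * √Q := by
  have hpos : 0 < 1 - δ := sub_pos.mpr hδ
  rw [← Real.sqrt_mul (inv_nonneg.mpr hpos.le)]
  refine Real.sqrt_le_sqrt ?_
  rw [← div_eq_inv_mul, le_div_iff₀ hpos]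
  linarith

theorem prop2_first_inequality_general
    (d n M N : ℕ) (x : Fin M → (Fin d → ℝ))
    (ψ : Fin N → (Fin M → ℝ))
    (horth : ∀ j k, ∑ i, ψ j i * ψ k i = if j = k then 1 else 0)
    (hspan : ∀ q : MvPolynomial (Fin d) ℝ, q.totalDegree ≤ 2 * n →
      ∃ c : Fin N → ℝ, ∀ i, eval (x i) q = ∑ k, c k * ψ k i)
    (u : Fin M → ℝ) (ε : ℝ)
    (hres : Real.sqrt (∑ k, (∑ i, u i * ψ k i - ∑ i, ψ k i) ^ 2) = ε)
    (hε : ε * Real.sqrt M < 1) :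
    ∀ p : MvPolynomial (Fin d) ℝ, p.totalDegree ≤ n →
      Real.sqrt (∑ i, (eval (x i) p) ^ 2)
        ≤ Real.sqrt (1 - ε * Real.sqrt M)⁻¹ *
            Real.sqrt (∑ i, u i * (eval (x i) p) ^ 2) := by
  intro p hp
  obtain ⟨c, hc⟩ := hspan (p * p) ((totalDegree_mul p p).trans (by omega))
  have hsq : ∀ i, eval (x i) p ^ 2 = ∑ k, c k * ψ k i := fun i => by
    rw [sq, ← eval_mul, hc]
  have herr := abs_sum_mul_sub_sum_le_of_orthonormal horth hsq u
  have hnorm := sqrt_sum_sq_le_sqrt_card_mul_sum fun i => sq_nonneg (eval (x i) p)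
  have hε0 : 0 ≤ ε := hres ▸ Real.sqrt_nonneg _
  rw [hres] at herr
  rw [Fintype.card_fin] at hnorm
  have hscaled := mul_le_mul_of_nonneg_right hnorm hε0
  refine sqrt_le_sqrt_inv_one_sub_mul_sqrt hε ?_
  linarith [neg_abs_le (∑ i, u i * eval (x i) p ^ 2 - ∑ i, eval (x i) p ^ 2)]

/-- Proposition 2, first inequality: with a near-exact nonnegative formula of
moment residual `ε` (for an orthonormal basis of `P_{2n}^d(X)` with respect to
the counting measure) and `ε√M < 1`, for every polynomial `p` of degree at
most `n`: `‖p‖_{ℓ²(X)} ≤ (1 − ε√M)^{-1/2} ‖p‖_{ℓ²_w(T_{2n})}`. -/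
theorem prop2_first_inequality
    (d n M N : ℕ) (x : Fin M → (Fin d → ℝ))
    (ψ : Fin N → (Fin M → ℝ))
    (hψpoly : ∀ k, ∃ q : MvPolynomial (Fin d) ℝ,
      q.totalDegree ≤ 2 * n ∧ ∀ i, ψ k i = eval (x i) q)
    (horth : ∀ j k, ∑ i, ψ j i * ψ k i = if j = k then 1 else 0)
    (hspan : ∀ q : MvPolynomial (Fin d) ℝ, q.totalDegree ≤ 2 * n →
      ∃ c : Fin N → ℝ, ∀ i, eval (x i) q = ∑ k, c k * ψ k i)
    (u : Fin M → ℝ) (hu : ∀ i, 0 ≤ u i) (ε : ℝ)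
    (hres : Real.sqrt (∑ k, (∑ i, u i * ψ k i - ∑ i, ψ k i) ^ 2) = ε)
    (hε : ε * Real.sqrt M < 1) :
    ∀ p : MvPolynomial (Fin d) ℝ, p.totalDegree ≤ n →
      Real.sqrt (∑ i, (eval (x i) p) ^ 2)
        ≤ Real.sqrt (1 - ε * Real.sqrt M)⁻¹ *
            Real.sqrt (∑ i, u i * (eval (x i) p) ^ 2) :=
  prop2_first_inequality_general d n M N x ψ horth hspan u ε hres hε
end

section
/- Under the assumptions of Proposition 2, for every continuous function f on K: ‖f − ℒ_n^c f‖_{ℓ²(X)} ≤ (1 + β_M(ε)) √M · E_n(f), where ℒ_n^c f is the weighted least-squares polynomial of degree ≤ n at (T_{2n}, w) and β_M(ε) = (1 − ε√M)^{−1/2}(1 + ε/√M)^{1/2}. -/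
open MvPolynomial


lemma aux_sq_nonneg {M : ℕ} (a : Fin M → ℝ) : 0 ≤ ∑ i, a i ^ 2 :=
  Finset.sum_nonneg fun i _ => sq_nonneg _

lemma aux_cs {M : ℕ} (a b : Fin M → ℝ) :
    ∑ i, a i * b i ≤ Real.sqrt (∑ i, a i ^ 2) * Real.sqrt (∑ i, b i ^ 2) := by
  have h := Finset.sum_mul_sq_le_sq_mul_sq Finset.univ a b
  calc ∑ i, a i * b i ≤ |∑ i, a i * b i| := le_abs_self _
    _ = Real.sqrt ((∑ i, a i * b i) ^ 2) := (Real.sqrt_sq_eq_abs _).symm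
    _ ≤ Real.sqrt ((∑ i, a i ^ 2) * ∑ i, b i ^ 2) := Real.sqrt_le_sqrt h
    _ = _ := Real.sqrt_mul (aux_sq_nonneg a) _

lemma aux_tri {M : ℕ} (a b : Fin M → ℝ) :
    Real.sqrt (∑ i, (a i + b i) ^ 2) ≤
      Real.sqrt (∑ i, a i ^ 2) + Real.sqrt (∑ i, b i ^ 2) := by
  have cs := aux_cs a b
  have ha := aux_sq_nonneg a
  have hb := aux_sq_nonneg b
  have h1 : ∑ i, (a i + b i) ^ 2 ≤
      (Real.sqrt (∑ i, a i ^ 2) + Real.sqrt (∑ i, b i ^ 2)) ^ 2 := by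
    have e1 : ∑ i, (a i + b i) ^ 2 = ∑ i, a i ^ 2 + 2 * ∑ i, a i * b i + ∑ i, b i ^ 2 := by
      rw [Finset.mul_sum, ← Finset.sum_add_distrib, ← Finset.sum_add_distrib]
      exact Finset.sum_congr rfl fun i _ => by ring
    have e2 : Real.sqrt (∑ i, a i ^ 2) * Real.sqrt (∑ i, a i ^ 2) = ∑ i, a i ^ 2 :=
      Real.mul_self_sqrt ha
    have e3 : Real.sqrt (∑ i, b i ^ 2) * Real.sqrt (∑ i, b i ^ 2) = ∑ i, b i ^ 2 :=
      Real.mul_self_sqrt hb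
    nlinarith [cs]
  calc Real.sqrt (∑ i, (a i + b i) ^ 2) ≤
      Real.sqrt ((Real.sqrt (∑ i, a i ^ 2) + Real.sqrt (∑ i, b i ^ 2)) ^ 2) :=
        Real.sqrt_le_sqrt h1
    _ = _ := Real.sqrt_sq (by positivity)

open MvPolynomial
lemma keyA (d M N : ℕ)
    (x : Fin M → (Fin d → ℝ))
    (ψ : Fin N → (Fin M → ℝ))
    (horth : ∀ j k, ∑ i, ψ j i * ψ k i = if j = k then 1 else 0)
    (u : Fin M → ℝ) (ε : ℝ)
    (hres : Real.sqrt (∑ k, (∑ i, u i * ψ k i - ∑ i, ψ k i) ^ 2) = ε)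
    (q : MvPolynomial (Fin d) ℝ)
    (c : Fin N → ℝ) (hc : ∀ i, eval (x i) q = ∑ k, c k * ψ k i) :
    |∑ i, u i * eval (x i) q - ∑ i, eval (x i) q|
      ≤ ε * Real.sqrt (∑ i, (eval (x i) q) ^ 2) := by
  set r : Fin N → ℝ := fun k => ∑ i, u i * ψ k i - ∑ i, ψ k i with hr
  have h1 : ∑ i, u i * eval (x i) q - ∑ i, eval (x i) q = ∑ k, c k * r k := by
    calc ∑ i, u i * eval (x i) q - ∑ i, eval (x i) q
        = ∑ i, ∑ k, u i * (c k * ψ k i) - ∑ i, ∑ k, c k * ψ k i := by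
          simp_rw [hc, Finset.mul_sum]
      _ = ∑ k, ∑ i, u i * (c k * ψ k i) - ∑ k, ∑ i, c k * ψ k i := by
          congr 1 <;> exact Finset.sum_comm
      _ = ∑ k, (∑ i, u i * (c k * ψ k i) - ∑ i, c k * ψ k i) :=
          (Finset.sum_sub_distrib _ _).symm
      _ = ∑ k, c k * r k := Finset.sum_congr rfl fun k _ => by
          rw [hr]; simp only [mul_sub, Finset.mul_sum]
          congr 1
          exact Finset.sum_congr rfl fun i _ => by ring
  have h2 : ∑ i, (eval (x i) q) ^ 2 = ∑ k, c k ^ 2 := by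
    calc ∑ i, (eval (x i) q) ^ 2
        = ∑ i, ∑ k, ∑ l, (c k * ψ k i) * (c l * ψ l i) := by
          simp_rw [hc, sq, Finset.sum_mul_sum]
      _ = ∑ k, ∑ l, ∑ i, (c k * ψ k i) * (c l * ψ l i) := by
          rw [Finset.sum_comm]
          exact Finset.sum_congr rfl fun k _ => Finset.sum_comm
      _ = ∑ k, ∑ l, (c k * c l) * ∑ i, ψ k i * ψ l i := by
          refine Finset.sum_congr rfl fun k _ => Finset.sum_congr rfl fun l _ => ?_
          rw [Finset.mul_sum]
          exact Finset.sum_congr rfl fun i _ => by ring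
      _ = ∑ k, c k ^ 2 := by
          simp_rw [horth, mul_ite, mul_one, mul_zero]
          refine Finset.sum_congr rfl fun k _ => ?_
          rw [Finset.sum_ite_eq Finset.univ k (fun l => c k * c l)]
          simp [sq]
  rw [h1, h2]
  have cs := aux_cs c r
  have : |∑ k, c k * r k| ≤ Real.sqrt (∑ k, c k ^ 2) * Real.sqrt (∑ k, r k ^ 2) := by
    rcases abs_cases (∑ k, c k * r k) with ⟨h, _⟩ | ⟨h, _⟩
    · rw [h]; exact cs
    · rw [h]
      have := aux_cs (fun k => -c k) r
      simpa [neg_mul, Finset.sum_neg_distrib, neg_sq] using this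
  calc |∑ k, c k * r k| ≤ Real.sqrt (∑ k, c k ^ 2) * Real.sqrt (∑ k, r k ^ 2) := this
    _ = ε * Real.sqrt (∑ k, c k ^ 2) := by rw [← hres, hr, mul_comm]

open MvPolynomial
lemma keyB (d n M N : ℕ)
    (x : Fin M → (Fin d → ℝ))
    (ψ : Fin N → (Fin M → ℝ))
    (horth : ∀ j k, ∑ i, ψ j i * ψ k i = if j = k then 1 else 0)
    (hspan : ∀ q : MvPolynomial (Fin d) ℝ, q.totalDegree ≤ 2 * n →
      ∃ c : Fin N → ℝ, ∀ i, eval (x i) q = ∑ k, c k * ψ k i)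
    (u : Fin M → ℝ) (ε : ℝ)
    (hres : Real.sqrt (∑ k, (∑ i, u i * ψ k i - ∑ i, ψ k i) ^ 2) = ε)
    (hM : 1 ≤ M)
    (g : MvPolynomial (Fin d) ℝ) (hg : g.totalDegree ≤ n) :
    (1 - ε * Real.sqrt M) * ∑ i, (eval (x i) g) ^ 2
      ≤ ∑ i, u i * (eval (x i) g) ^ 2 := by
  have hε0 : 0 ≤ ε := hres ▸ Real.sqrt_nonneg _
  have hq : (g * g).totalDegree ≤ 2 * n := by
    calc (g * g).totalDegree ≤ g.totalDegree + g.totalDegree := totalDegree_mul g g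
      _ ≤ 2 * n := by omega
  obtain ⟨c, hc⟩ := hspan (g * g) hq
  have hA := keyA d M N x ψ horth u ε hres (g * g) c hc
  have he : ∀ i, eval (x i) (g * g) = (eval (x i) g) ^ 2 := fun i => by
    rw [eval_mul, sq]
  simp only [he] at hA
  set S : ℝ := ∑ i, (eval (x i) g) ^ 2 with hS
  have hS0 : 0 ≤ S := Finset.sum_nonneg fun i _ => sq_nonneg _
  have h4 : ∑ i, ((eval (x i) g) ^ 2) ^ 2 ≤ S ^ 2 := by
    have : ∀ i ∈ Finset.univ, ((eval (x i) g) ^ 2) ^ 2 ≤ (eval (x i) g) ^ 2 * S := by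
      intro i _
      rw [sq ((eval (x i) g) ^ 2), hS]
      exact mul_le_mul_of_nonneg_left
        (Finset.single_le_sum (f := fun j => (eval (x j) g) ^ 2) (fun j _ => sq_nonneg _) (Finset.mem_univ i)) (sq_nonneg _)
    calc ∑ i, ((eval (x i) g) ^ 2) ^ 2 ≤ ∑ i, (eval (x i) g) ^ 2 * S :=
        Finset.sum_le_sum this
      _ = S ^ 2 := by rw [← Finset.sum_mul, sq]
  have h5 : Real.sqrt (∑ i, ((eval (x i) g) ^ 2) ^ 2) ≤ S := by
    calc Real.sqrt (∑ i, ((eval (x i) g) ^ 2) ^ 2) ≤ Real.sqrt (S ^ 2) :=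
        Real.sqrt_le_sqrt h4
      _ = S := Real.sqrt_sq hS0
  have habs := abs_le.mp hA
  have h6 : S - ε * S ≤ ∑ i, u i * (eval (x i) g) ^ 2 := by
    have h := habs.1
    have hm : ε * Real.sqrt (∑ i, ((eval (x i) g) ^ 2) ^ 2) ≤ ε * S :=
      mul_le_mul_of_nonneg_left h5 hε0
    linarith
  have h7 : 1 ≤ Real.sqrt M := by
    rw [show (1:ℝ) = Real.sqrt 1 from (Real.sqrt_one).symm]
    exact Real.sqrt_le_sqrt (by exact_mod_cast hM)
  have h8 : ε * S ≤ ε * Real.sqrt M * S := by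
    nlinarith [mul_nonneg hε0 hS0]
  nlinarith
lemma keyC (d n M N : ℕ)
    (x : Fin M → (Fin d → ℝ))
    (ψ : Fin N → (Fin M → ℝ))
    (horth : ∀ j k, ∑ i, ψ j i * ψ k i = if j = k then 1 else 0)
    (hspan : ∀ q : MvPolynomial (Fin d) ℝ, q.totalDegree ≤ 2 * n →
      ∃ c : Fin N → ℝ, ∀ i, eval (x i) q = ∑ k, c k * ψ k i)
    (u : Fin M → ℝ) (ε : ℝ)
    (hres : Real.sqrt (∑ k, (∑ i, u i * ψ k i - ∑ i, ψ k i) ^ 2) = ε) :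
    ∑ i, u i ≤ M + ε * Real.sqrt M := by
  obtain ⟨c, hc⟩ := hspan 1 (by simp [totalDegree_one])
  have hA := keyA d M N x ψ horth u ε hres 1 c hc
  simp only [map_one, mul_one, one_pow] at hA
  have hcard : ∑ _i : Fin M, (1:ℝ) = M := by simp
  rw [hcard] at hA
  have := (abs_le.mp hA).2
  linarith

lemma quad_zero (A B : ℝ) (hB : 0 ≤ B) (h : ∀ t : ℝ, 0 ≤ t ^ 2 * B - 2 * t * A) :
    A = 0 := by
  set t := A / (B + 1) with htdef
  have hB1 : (0:ℝ) < B + 1 := by linarith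
  have ht : t * (B + 1) = A := by rw [htdef]; field_simp
  have h0 := h t
  rw [← ht] at h0
  have h2 : t ^ 2 ≤ 0 := by nlinarith
  have h3 : t = 0 := by nlinarith [sq_nonneg t]
  rw [← ht, h3]; ring


/-- Corollary 1: under the assumptions of Proposition 2, the weighted
least-squares polynomial `p₀` of degree at most `n` at the near-exact CATCH
formula satisfies `‖f − p₀‖_{ℓ²(X)} ≤ (1 + β_M(ε)) √M · E` for every uniform
error bound `E` on `K` achieved by a polynomial of degree at most `n`, where
`β_M(ε) = (1−ε√M)^{-1/2}(1+ε/√M)^{1/2}`. -/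
theorem corollary1_catchls_error
    (d n M N : ℕ) (K : Set (Fin d → ℝ))
    (x : Fin M → (Fin d → ℝ)) (hx : ∀ i, x i ∈ K)
    (ψ : Fin N → (Fin M → ℝ))
    (hψpoly : ∀ k, ∃ q : MvPolynomial (Fin d) ℝ,
      q.totalDegree ≤ 2 * n ∧ ∀ i, ψ k i = eval (x i) q)
    (horth : ∀ j k, ∑ i, ψ j i * ψ k i = if j = k then 1 else 0)
    (hspan : ∀ q : MvPolynomial (Fin d) ℝ, q.totalDegree ≤ 2 * n →
      ∃ c : Fin N → ℝ, ∀ i, eval (x i) q = ∑ k, c k * ψ k i)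
    (u : Fin M → ℝ) (hu : ∀ i, 0 ≤ u i) (ε : ℝ)
    (hres : Real.sqrt (∑ k, (∑ i, u i * ψ k i - ∑ i, ψ k i) ^ 2) = ε)
    (hε : ε * Real.sqrt M < 1)
    (f : (Fin d → ℝ) → ℝ) (hf : ContinuousOn f K)
    (p₀ : MvPolynomial (Fin d) ℝ) (hp₀ : p₀.totalDegree ≤ n)
    (hmin : ∀ q : MvPolynomial (Fin d) ℝ, q.totalDegree ≤ n →
      ∑ i, u i * (f (x i) - eval (x i) p₀) ^ 2
        ≤ ∑ i, u i * (f (x i) - eval (x i) q) ^ 2)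
    (E : ℝ) (p : MvPolynomial (Fin d) ℝ) (hp : p.totalDegree ≤ n)
    (hE : ∀ y ∈ K, |f y - eval y p| ≤ E) :
    Real.sqrt (∑ i, (f (x i) - eval (x i) p₀) ^ 2)
      ≤ (1 + Real.sqrt (1 - ε * Real.sqrt M)⁻¹ *
            Real.sqrt (1 + ε / Real.sqrt M)) * Real.sqrt M * E := by
  rcases Nat.eq_zero_or_pos M with hM0 | hM
  · subst hM0
    simp
  -- abbreviations (as plain functions, not `set`)
  have hε0 : 0 ≤ ε := hres ▸ Real.sqrt_nonneg _
  have hE0 : 0 ≤ E := le_trans (abs_nonneg _) (hE (x ⟨0, hM⟩) (hx _))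
  have hMpos : (0:ℝ) < M := by exact_mod_cast hM
  have hsM : (0:ℝ) < Real.sqrt M := Real.sqrt_pos.mpr hMpos
  have hden : (0:ℝ) < 1 - ε * Real.sqrt M := by linarith
  -- the functions
  let g : Fin M → ℝ := fun i => eval (x i) p - eval (x i) p₀
  let a : Fin M → ℝ := fun i => f (x i) - eval (x i) p
  let F : Fin M → ℝ := fun i => f (x i) - eval (x i) p₀
  have hgdeg : (p - p₀).totalDegree ≤ n := by
    have h := MvPolynomial.totalDegree_add p (-p₀)
    rw [MvPolynomial.totalDegree_neg] at h
    exact le_trans (by simpa [sub_eq_add_neg] using h) (max_le hp hp₀)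
  -- orthogonality A = 0
  have key : ∀ t : ℝ, 0 ≤ t ^ 2 * (∑ i, u i * g i ^ 2)
      - 2 * t * (∑ i, u i * (F i * g i)) := by
    intro t
    have hqdeg : (p₀ + C t * (p - p₀)).totalDegree ≤ n := by
      refine le_trans (MvPolynomial.totalDegree_add _ _) (max_le hp₀ ?_)
      refine le_trans (MvPolynomial.totalDegree_mul _ _) ?_
      simpa [MvPolynomial.totalDegree_C] using hgdeg
    have hm := hmin _ hqdeg
    have hev : ∀ i, u i * (f (x i) - eval (x i) (p₀ + C t * (p - p₀))) ^ 2
        = u i * F i ^ 2 - 2 * t * (u i * (F i * g i)) + t ^ 2 * (u i * g i ^ 2) := by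
      intro i
      show u i * (f (x i) - eval (x i) (p₀ + C t * (p - p₀))) ^ 2
        = u i * (f (x i) - eval (x i) p₀) ^ 2
          - 2 * t * (u i * ((f (x i) - eval (x i) p₀) * (eval (x i) p - eval (x i) p₀)))
          + t ^ 2 * (u i * (eval (x i) p - eval (x i) p₀) ^ 2)
      rw [eval_add, eval_mul, eval_C, eval_sub]
      ring
    have hm2 : ∑ i, u i * F i ^ 2 ≤
        ∑ i, (u i * F i ^ 2 - 2 * t * (u i * (F i * g i)) + t ^ 2 * (u i * g i ^ 2)) :=
      le_trans (le_of_eq rfl) (le_trans hm (le_of_eq (Finset.sum_congr rfl fun i _ => hev i)))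
    rw [Finset.sum_add_distrib, Finset.sum_sub_distrib, ← Finset.mul_sum,
      ← Finset.mul_sum] at hm2
    linarith
  have hB0 : 0 ≤ ∑ i, u i * g i ^ 2 :=
    Finset.sum_nonneg fun i _ => mul_nonneg (hu i) (sq_nonneg _)
  have hA0 : ∑ i, u i * (F i * g i) = 0 := quad_zero _ _ hB0 key
  -- Du ≤ Sufp
  have hSufp0 : 0 ≤ ∑ i, u i * a i ^ 2 :=
    Finset.sum_nonneg fun i _ => mul_nonneg (hu i) (sq_nonneg _)
  have hCS : ∑ i, u i * g i ^ 2 ≤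
      Real.sqrt (∑ i, u i * a i ^ 2) * Real.sqrt (∑ i, u i * g i ^ 2) := by
    have e1 : ∑ i, u i * g i ^ 2
        = ∑ i, (-(Real.sqrt (u i) * a i)) * (Real.sqrt (u i) * g i) := by
      have e2 : ∑ i, u i * (a i * g i) + ∑ i, u i * g i ^ 2
          = ∑ i, u i * (F i * g i) := by
        rw [← Finset.sum_add_distrib]
        refine Finset.sum_congr rfl fun i _ => ?_
        show u i * (a i * g i) + u i * g i ^ 2 = u i * (F i * g i)
        have hFag : F i = a i + g i := by
          show f (x i) - eval (x i) p₀
            = (f (x i) - eval (x i) p) + (eval (x i) p - eval (x i) p₀)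
          ring
        rw [hFag]; ring
      have e3 : ∀ i, (-(Real.sqrt (u i) * a i)) * (Real.sqrt (u i) * g i)
          = -(u i * (a i * g i)) := by
        intro i
        have h := Real.mul_self_sqrt (hu i)
        calc (-(Real.sqrt (u i) * a i)) * (Real.sqrt (u i) * g i)
            = -((Real.sqrt (u i) * Real.sqrt (u i)) * (a i * g i)) := by ring
          _ = -(u i * (a i * g i)) := by rw [h]
      rw [hA0] at e2
      rw [Finset.sum_congr rfl fun i _ => e3 i, Finset.sum_neg_distrib]
      linarith
    have ha2 : ∑ i, (-(Real.sqrt (u i) * a i)) ^ 2 = ∑ i, u i * a i ^ 2 :=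
      Finset.sum_congr rfl fun i _ => by
        rw [neg_sq, mul_pow, Real.sq_sqrt (hu i)]
    have hg2 : ∑ i, (Real.sqrt (u i) * g i) ^ 2 = ∑ i, u i * g i ^ 2 :=
      Finset.sum_congr rfl fun i _ => by
        rw [mul_pow, Real.sq_sqrt (hu i)]
    have := aux_cs (fun i => -(Real.sqrt (u i) * a i)) (fun i => Real.sqrt (u i) * g i)
    rw [ha2, hg2] at this
    conv_lhs => rw [e1]
    exact this
  have hDu : ∑ i, u i * g i ^ 2 ≤ ∑ i, u i * a i ^ 2 := by
    rcases eq_or_lt_of_le hB0 with h0 | h0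
    · linarith
    · have hsg : 0 < Real.sqrt (∑ i, u i * g i ^ 2) := Real.sqrt_pos.mpr h0
      have h1 : Real.sqrt (∑ i, u i * g i ^ 2) * Real.sqrt (∑ i, u i * g i ^ 2)
          = ∑ i, u i * g i ^ 2 := Real.mul_self_sqrt hB0
      have h2 : Real.sqrt (∑ i, u i * g i ^ 2) ≤ Real.sqrt (∑ i, u i * a i ^ 2) := by
        have := hCS
        rw [← h1] at this
        exact le_of_mul_le_mul_right (by linarith) hsg
      have h3 := Real.mul_self_sqrt hSufp0
      nlinarith [Real.sqrt_nonneg (∑ i, u i * g i ^ 2), Real.sqrt_nonneg (∑ i, u i * a i ^ 2)]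
  -- Sufp ≤ E² (M + ε√M)
  have hSufp_le : ∑ i, u i * a i ^ 2 ≤ E ^ 2 * ((M : ℝ) + ε * Real.sqrt M) := by
    have step1 : ∑ i, u i * a i ^ 2 ≤ (∑ i, u i) * E ^ 2 := by
      rw [Finset.sum_mul]
      refine Finset.sum_le_sum fun i _ => ?_
      have hEi := abs_le.mp (hE (x i) (hx i))
      have : a i ^ 2 ≤ E ^ 2 := by
        show (f (x i) - eval (x i) p) ^ 2 ≤ E ^ 2
        exact sq_le_sq' hEi.1 hEi.2
      exact mul_le_mul_of_nonneg_left this (hu i)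
    have hsum_u := keyC d n M N x ψ horth hspan u ε hres
    nlinarith [sq_nonneg E]
  -- (1-ε√M) D ≤ Du
  have hBg := keyB d n M N x ψ horth hspan u ε hres hM (p - p₀) hgdeg
  have hBg' : (1 - ε * Real.sqrt M) * ∑ i, g i ^ 2 ≤ ∑ i, u i * g i ^ 2 := by
    have hev : ∀ i : Fin M, eval (x i) (p - p₀) = g i := fun i => by
      show _ = eval (x i) p - eval (x i) p₀; rw [eval_sub]
    have hsum_eq : ∑ i, g i ^ 2 = ∑ i, (eval (x i) (p - p₀)) ^ 2 :=
      Finset.sum_congr rfl fun i _ => by rw [hev i]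
    have hsum_eq2 : ∑ i, u i * (eval (x i) (p - p₀)) ^ 2 = ∑ i, u i * g i ^ 2 :=
      Finset.sum_congr rfl fun i _ => by rw [hev i]
    calc (1 - ε * Real.sqrt M) * ∑ i, g i ^ 2
        = (1 - ε * Real.sqrt M) * ∑ i, (eval (x i) (p - p₀)) ^ 2 := by rw [hsum_eq]
      _ ≤ ∑ i, u i * (eval (x i) (p - p₀)) ^ 2 := hBg
      _ = ∑ i, u i * g i ^ 2 := hsum_eq2
  have hD0 : 0 ≤ ∑ i, g i ^ 2 := Finset.sum_nonneg fun i _ => sq_nonneg _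
  have hD : ∑ i, g i ^ 2
      ≤ (1 - ε * Real.sqrt M)⁻¹ * (E ^ 2 * ((M : ℝ) + ε * Real.sqrt M)) := by
    rw [inv_mul_eq_div, le_div_iff₀ hden]
    nlinarith
  -- sqrt of D bound
  have hfrac : (M : ℝ) + ε * Real.sqrt M = (1 + ε / Real.sqrt M) * (Real.sqrt M * E) ^ 2 / E ^ 2 ∨ True := Or.inr trivial
  have hMsq : Real.sqrt M * Real.sqrt M = (M : ℝ) := Real.mul_self_sqrt (le_of_lt hMpos)
  have hkey2 : (1 - ε * Real.sqrt M)⁻¹ * (E ^ 2 * ((M : ℝ) + ε * Real.sqrt M))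
      = (1 - ε * Real.sqrt M)⁻¹ * ((1 + ε / Real.sqrt M) * (Real.sqrt M * E) ^ 2) := by
    have h1 : (M : ℝ) + ε * Real.sqrt M = (1 + ε / Real.sqrt M) * (M : ℝ) := by
      field_simp
      nlinarith [hMsq]
    rw [h1]
    have : (Real.sqrt M * E) ^ 2 = (M : ℝ) * E ^ 2 := by
      rw [mul_pow, sq, hMsq]
    rw [this]; ring
  have hfr0 : (0:ℝ) ≤ 1 + ε / Real.sqrt M := by positivity
  have hsqrtD : Real.sqrt (∑ i, g i ^ 2)
      ≤ Real.sqrt (1 - ε * Real.sqrt M)⁻¹ * Real.sqrt (1 + ε / Real.sqrt M)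
          * (Real.sqrt M * E) := by
    calc Real.sqrt (∑ i, g i ^ 2)
        ≤ Real.sqrt ((1 - ε * Real.sqrt M)⁻¹ * ((1 + ε / Real.sqrt M) * (Real.sqrt M * E) ^ 2)) := by
          rw [← hkey2]; exact Real.sqrt_le_sqrt hD
      _ = Real.sqrt (1 - ε * Real.sqrt M)⁻¹ * (Real.sqrt (1 + ε / Real.sqrt M)
            * Real.sqrt ((Real.sqrt M * E) ^ 2)) := by
          rw [Real.sqrt_mul (by positivity), Real.sqrt_mul hfr0, Real.sqrt_inv]
      _ = Real.sqrt (1 - ε * Real.sqrt M)⁻¹ * Real.sqrt (1 + ε / Real.sqrt M)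
            * (Real.sqrt M * E) := by
          rw [Real.sqrt_sq (by positivity)]; ring
  -- left part: ‖f - p‖ ≤ √M E
  have hsqrta : Real.sqrt (∑ i, a i ^ 2) ≤ Real.sqrt M * E := by
    have h1 : ∑ i, a i ^ 2 ≤ (M : ℝ) * E ^ 2 := by
      have : ∀ i ∈ Finset.univ, a i ^ 2 ≤ E ^ 2 := by
        intro i _
        have hEi := abs_le.mp (hE (x i) (hx i))
        exact sq_le_sq' hEi.1 hEi.2
      calc ∑ i, a i ^ 2 ≤ ∑ _i : Fin M, E ^ 2 := Finset.sum_le_sum this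
        _ = (M : ℝ) * E ^ 2 := by simp [mul_comm]
    calc Real.sqrt (∑ i, a i ^ 2) ≤ Real.sqrt ((M : ℝ) * E ^ 2) := Real.sqrt_le_sqrt h1
      _ = Real.sqrt M * E := by
        rw [Real.sqrt_mul (le_of_lt hMpos), Real.sqrt_sq hE0]
  -- triangle inequality
  have htri := aux_tri a g
  have hFag : ∑ i, (f (x i) - eval (x i) p₀) ^ 2 = ∑ i, (a i + g i) ^ 2 :=
    Finset.sum_congr rfl fun i _ => by
      show (f (x i) - eval (x i) p₀) ^ 2
        = ((f (x i) - eval (x i) p) + (eval (x i) p - eval (x i) p₀)) ^ 2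
      ring
  rw [hFag]
  calc Real.sqrt (∑ i, (a i + g i) ^ 2)
      ≤ Real.sqrt (∑ i, a i ^ 2) + Real.sqrt (∑ i, g i ^ 2) := htri
    _ ≤ Real.sqrt M * E + Real.sqrt (1 - ε * Real.sqrt M)⁻¹
          * Real.sqrt (1 + ε / Real.sqrt M) * (Real.sqrt M * E) := by
        exact add_le_add hsqrta hsqrtD
    _ = (1 + Real.sqrt (1 - ε * Real.sqrt M)⁻¹ * Real.sqrt (1 + ε / Real.sqrt M))
          * Real.sqrt M * E := by ring
end

section
/- Let X_n ⊂ K be a polynomial mesh of constant C_n and cardinality M_n for degree n (i.e., ‖p‖_{L∞(K)} ≤ C_n max_{x∈X_n}|p(x)| for all p ∈ P_n^d(K)). Then the ℓ²(X_n) least-squares projection operator ℒ_n : C(K) → P_n^d(K) satisfies ‖ℒ_n f‖_{L∞(K)} ≤ C_n √M_n ‖f‖_{L∞(K)} for all f ∈ C(K). -/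
open MvPolynomial

/-- Least squares on a polynomial mesh is near optimal: if `X_n` is a
polynomial mesh of `K` with constant `C` and cardinality `M`, and `p₀` is the
least-squares polynomial of degree at most `n` for `f` on `X_n` (unit
weights), then `‖p₀‖_{L∞(K)} ≤ C √M ‖f‖_{L∞(K)}`, expressed through an
arbitrary uniform bound `F` of `|f|` on `K`. -/
theorem ls_operator_norm_mesh
    (d n M : ℕ) (hM : 0 < M) (K : Set (Fin d → ℝ)) (C : ℝ)
    (x : Fin M → (Fin d → ℝ)) (hx : ∀ i, x i ∈ K)
    (hmesh : ∀ p : MvPolynomial (Fin d) ℝ, p.totalDegree ≤ n → ∀ y ∈ K,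
      |eval y p| ≤ C * Finset.univ.sup' ⟨⟨0, hM⟩, Finset.mem_univ _⟩
        (fun i => |eval (x i) p|))
    (f : (Fin d → ℝ) → ℝ) (hf : ContinuousOn f K)
    (p₀ : MvPolynomial (Fin d) ℝ) (hp₀ : p₀.totalDegree ≤ n)
    (hmin : ∀ q : MvPolynomial (Fin d) ℝ, q.totalDegree ≤ n →
      ∑ i, (f (x i) - eval (x i) p₀) ^ 2 ≤ ∑ i, (f (x i) - eval (x i) q) ^ 2)
    (F : ℝ) (hF : ∀ y ∈ K, |f y| ≤ F) :
    ∀ y ∈ K, |eval y p₀| ≤ C * Real.sqrt M * F := by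
  intro y hy
  set a : Fin M → ℝ := fun i => eval (x i) p₀ with ha
  set fv : Fin M → ℝ := fun i => f (x i) with hfv
  set S : ℝ := ∑ i, a i ^ 2 with hS
  set B : ℝ := ∑ i, fv i * a i with hB
  have hS0 : 0 ≤ S := Finset.sum_nonneg fun i _ => sq_nonneg _
  have hF0 : 0 ≤ F := le_trans (abs_nonneg _) (hF (x ⟨0, hM⟩) (hx _))
  -- C ≥ 0
  have hC : (0:ℝ) ≤ C := by
    have h1 := hmesh 1 (by simp [totalDegree_one]) y hy
    simp [Finset.sup'_const] at h1
    have h2 : (Finset.univ.sup' ⟨⟨0, hM⟩, Finset.mem_univ _⟩ fun _ : Fin M => (1:ℝ)) = 1 :=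
      Finset.sup'_const _ _
    rw [h2] at h1
    linarith
  -- expansion lemma
  have expand : ∀ c : ℝ, ∑ i, (fv i - c * a i) ^ 2
      = (∑ i, fv i ^ 2) - 2 * c * B + c ^ 2 * S := by
    intro c
    have : ∀ i ∈ Finset.univ, (fv i - c * a i) ^ 2
        = fv i ^ 2 - 2 * c * (fv i * a i) + c ^ 2 * a i ^ 2 :=
      fun i _ => by ring
    rw [Finset.sum_congr rfl this, Finset.sum_add_distrib, Finset.sum_sub_distrib,
      ← Finset.mul_sum, ← Finset.mul_sum, hB, hS]
  -- minimality instantiated at c • p₀ (as C c * p₀)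
  have hmin' : ∀ c : ℝ, (∑ i, fv i ^ 2) - 2 * B + S
      ≤ (∑ i, fv i ^ 2) - 2 * c * B + c ^ 2 * S := by
    intro c
    have hdeg : (MvPolynomial.C c * p₀).totalDegree ≤ n :=
      le_trans (totalDegree_mul _ _) (by simp [totalDegree_C, hp₀])
    have h := hmin (MvPolynomial.C c * p₀) hdeg
    have hev : ∀ i, eval (x i) (MvPolynomial.C c * p₀) = c * a i := by
      intro i; simp [ha]
    rw [← expand c]
    calc (∑ i, fv i ^ 2) - 2 * B + S
        = (∑ i, fv i ^ 2) - 2 * 1 * B + 1 ^ 2 * S := by ring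
      _ = ∑ i, (fv i - 1 * a i) ^ 2 := (expand 1).symm
      _ = ∑ i, (fv i - a i) ^ 2 := by simp
      _ ≤ ∑ i, (fv i - eval (x i) (MvPolynomial.C c * p₀)) ^ 2 := h
      _ = ∑ i, (fv i - c * a i) ^ 2 := by simp_rw [hev]
  -- S ≤ ∑ fv²
  have hCS : B ^ 2 ≤ (∑ i, fv i ^ 2) * S :=
    Finset.sum_mul_sq_le_sq_mul_sq Finset.univ fv a
  have hkey : S ≤ ∑ i, fv i ^ 2 := by
    rcases eq_or_lt_of_le hS0 with h0 | hpos
    · rw [← h0]; exact Finset.sum_nonneg fun i _ => sq_nonneg _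
    · have h := hmin' (B / S)
      have hBS : B = S := by
        have h2 : (∑ i, fv i ^ 2) - 2 * (B / S) * B + (B / S) ^ 2 * S
            = (∑ i, fv i ^ 2) - B ^ 2 / S := by field_simp; ring
        rw [h2] at h
        have h4 : S - 2 * B ≤ -(B ^ 2) / S := by
          rw [neg_div]; linarith
        have h5 := (le_div_iff₀ hpos).mp h4
        have h6 : (B - S) ^ 2 ≤ 0 := by nlinarith
        have h7 : B - S = 0 := by nlinarith [sq_nonneg (B - S)]
        linarith
      nlinarith [hCS, hpos]
  -- |a j| ≤ √S
  have hsup : ∀ j : Fin M, |a j| ≤ Real.sqrt M * F := by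
    intro j
    have h1 : a j ^ 2 ≤ S := Finset.single_le_sum (fun i _ => sq_nonneg (a i))
      (Finset.mem_univ j)
    have h2 : ∑ i, fv i ^ 2 ≤ M * F ^ 2 := by
      calc ∑ i, fv i ^ 2 ≤ ∑ _i : Fin M, F ^ 2 :=
            Finset.sum_le_sum fun i _ => sq_le_sq' (by have := hF (x i) (hx i); cases abs_le.mp this; linarith) (le_of_abs_le (hF (x i) (hx i)))
        _ = M * F ^ 2 := by simp [Finset.sum_const, nsmul_eq_mul]
    have : |a j| = Real.sqrt (a j ^ 2) := (Real.sqrt_sq_eq_abs _).symm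
    rw [this]
    calc Real.sqrt (a j ^ 2) ≤ Real.sqrt (M * F ^ 2) :=
          Real.sqrt_le_sqrt (by linarith)
      _ = Real.sqrt M * F := by
          rw [Real.sqrt_mul (by positivity), Real.sqrt_sq hF0]
  have h := hmesh p₀ hp₀ y hy
  calc |eval y p₀| ≤ C * Finset.univ.sup' ⟨⟨0, hM⟩, Finset.mem_univ _⟩
        (fun i => |eval (x i) p₀|) := h
    _ ≤ C * (Real.sqrt M * F) := by
        apply mul_le_mul_of_nonneg_left _ hC
        exact Finset.sup'_le _ _ fun i _ => hsup i
    _ = C * Real.sqrt M * F := by ring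
end

section
/- Let X_n be a polynomial mesh of K with constant C_n and cardinality M_n, and let T_{2n} ⊆ X_n support a positive quadrature formula exact for polynomials of degree ≤ 2n with respect to the counting measure on X_n. Then T_{2n} is itself a polynomial mesh for degree n with constant C_n √M_n: ‖p‖_{L∞(K)} ≤ C_n √M_n max_{t∈T_{2n}} |p(t)| for all p ∈ P_n^d(K). -/
open MvPolynomial

/-- The CATCH points of a polynomial mesh are a polynomial mesh: if `X_n` is
a mesh of `K` with constant `C` and cardinality `M`, and `T_{2n} ⊆ X_n`
carries a positive quadrature formula exact at degree `2n` for the counting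
measure of `X_n`, then `‖p‖_{L∞(K)} ≤ C √M max_{t∈T_{2n}}|p(t)|` for every
polynomial `p` of degree at most `n` (the maximum expressed through an
arbitrary upper bound `A`). -/
theorem catch_points_are_mesh
    (d n M m : ℕ) (hM : 0 < M) (K : Set (Fin d → ℝ)) (C : ℝ)
    (x : Fin M → (Fin d → ℝ)) (hx : ∀ i, x i ∈ K)
    (hmesh : ∀ p : MvPolynomial (Fin d) ℝ, p.totalDegree ≤ n → ∀ y ∈ K,
      |eval y p| ≤ C * Finset.univ.sup' ⟨⟨0, hM⟩, Finset.mem_univ _⟩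
        (fun i => |eval (x i) p|))
    (t : Fin m → (Fin d → ℝ)) (ht : ∀ j, ∃ i, t j = x i)
    (w : Fin m → ℝ) (hw : ∀ j, 0 < w j)
    (hexact : ∀ q : MvPolynomial (Fin d) ℝ, q.totalDegree ≤ 2 * n →
      ∑ i, eval (x i) q = ∑ j, w j * eval (t j) q) :
    ∀ p : MvPolynomial (Fin d) ℝ, p.totalDegree ≤ n →
      ∀ A : ℝ, 0 ≤ A → (∀ j, |eval (t j) p| ≤ A) →
        ∀ y ∈ K, |eval y p| ≤ C * Real.sqrt M * A := by
  intro p hp A hA hTA y hy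
  -- C ≥ 0 from applying the mesh inequality to the constant polynomial 1
  have hC : (1 : ℝ) ≤ C := by
    have := hmesh 1 (by simp) y hy
    simp only [map_one, abs_one] at this
    have hc : (Finset.univ.sup' ⟨⟨0, hM⟩, Finset.mem_univ _⟩ fun (_ : Fin M) => (1 : ℝ)) = 1 :=
      Finset.sup'_const _ _
    rw [hc] at this
    simpa using this
  have hC0 : 0 ≤ C := by linarith
  -- total sum of weights equals M
  have hwsum : ∑ j, w j = (M : ℝ) := by
    have := hexact 1 (by simp)
    simpa using this.symm
  -- ℓ² bound: for each i, (p(x i))² ≤ M * A²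
  have hsq : ∀ i : Fin M, (eval (x i) p) ^ 2 ≤ (M : ℝ) * A ^ 2 := by
    intro i
    have hdeg : (p * p).totalDegree ≤ 2 * n := by
      calc (p * p).totalDegree ≤ p.totalDegree + p.totalDegree :=
            totalDegree_mul p p
        _ ≤ 2 * n := by omega
    have hex := hexact (p * p) hdeg
    have h1 : (eval (x i) p) ^ 2 ≤ ∑ k, (eval (x k) p) ^ 2 := by
      have := Finset.single_le_sum (f := fun k => (eval (x k) p) ^ 2)
        (fun k _ => sq_nonneg _) (Finset.mem_univ i)
      exact this
    have h2 : ∑ k, (eval (x k) p) ^ 2 = ∑ j, w j * (eval (t j) p) ^ 2 := by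
      simpa [sq, map_mul] using hex
    have h3 : ∑ j, w j * (eval (t j) p) ^ 2 ≤ ∑ j, w j * A ^ 2 := by
      apply Finset.sum_le_sum
      intro j _
      have : (eval (t j) p) ^ 2 ≤ A ^ 2 := by
        have := hTA j
        nlinarith [abs_nonneg (eval (t j) p), sq_abs (eval (t j) p)]
      nlinarith [(hw j).le]
    have h4 : ∑ j, w j * A ^ 2 = (M : ℝ) * A ^ 2 := by
      rw [← Finset.sum_mul, hwsum]
    linarith
  -- hence each |p(x i)| ≤ √M * A
  have habs : ∀ i : Fin M, |eval (x i) p| ≤ Real.sqrt M * A := by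
    intro i
    have h0 : (0 : ℝ) ≤ Real.sqrt M * A := by positivity
    have := hsq i
    nlinarith [sq_abs (eval (x i) p), Real.sq_sqrt (by positivity : (0:ℝ) ≤ (M:ℝ)),
      abs_nonneg (eval (x i) p)]
  have hsup : Finset.univ.sup' ⟨⟨0, hM⟩, Finset.mem_univ _⟩
      (fun i => |eval (x i) p|) ≤ Real.sqrt M * A :=
    Finset.sup'_le _ _ fun i _ => habs i
  calc |eval y p| ≤ C * Finset.univ.sup' ⟨⟨0, hM⟩, Finset.mem_univ _⟩
        (fun i => |eval (x i) p|) := hmesh p hp y hy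
    _ ≤ C * (Real.sqrt M * A) := by
        exact mul_le_mul_of_nonneg_left hsup hC0
    _ = C * Real.sqrt M * A := by ring
end

section
/- Let X_n be a polynomial mesh of K with constant C_n and cardinality M_n, and let (T_{2n}, w) be a near-exact positive formula with moment residual ε (relative to an orthonormal basis of P_{2n}^d(X_n) for the counting measure), with ε√M_n < 1. Then the weighted least-squares operator ℒ_n^c at (T_{2n}, w) satisfies ‖ℒ_n^c‖ ≤ C_n √M_n β_{M_n}(ε), where β_M(ε) = (1−ε√M)^{−1/2}(1+ε/√M)^{1/2} and ‖·‖ is the uniform operator norm on C(K). -/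
/-!
By the mesh inequality it suffices to bound the discrete norm `S = ∑ᵢ p₀(xᵢ)²`. The functions
`p₀²` and `1` lie in `P_{2n}(X_n) = span ψ`, so expanding them in the orthonormal basis `ψ` and
applying Cauchy–Schwarz against the moment residual gives `S (1 - ε√M) ≤ ∑ᵢ uᵢ p₀(xᵢ)²` and
`∑ᵢ uᵢ ≤ M + ε√M`. As a weighted least-squares projection, `p₀` has weighted norm at most that
of `f`, which is at most `(∑ᵢ uᵢ) F²`.
-/

open MvPolynomial

section Orthonormal

variable {ι κ : Type*} [Fintype ι] [Fintype κ] {ψ : κ → ι → ℝ} {g : ι → ℝ} {c : κ → ℝ}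

theorem sum_mul_sub_sum_eq_sum_coeff_mul (hg : ∀ i, g i = ∑ k, c k * ψ k i) (u : ι → ℝ) :
    ∑ i, u i * g i - ∑ i, g i = ∑ k, c k * (∑ i, u i * ψ k i - ∑ i, ψ k i) := by
  calc ∑ i, u i * g i - ∑ i, g i = ∑ i, ∑ k, c k * ((u i - 1) * ψ k i) := by
        rw [← Finset.sum_sub_distrib]
        refine Finset.sum_congr rfl fun i _ => ?_
        rw [hg, Finset.mul_sum, ← Finset.sum_sub_distrib]
        exact Finset.sum_congr rfl fun _ _ => by ring
    _ = ∑ k, c k * (∑ i, u i * ψ k i - ∑ i, ψ k i) := by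
        rw [Finset.sum_comm]
        refine Finset.sum_congr rfl fun k _ => ?_
        rw [← Finset.mul_sum, ← Finset.sum_sub_distrib]
        simp_rw [sub_one_mul]

variable [DecidableEq κ]

theorem sum_mul_eq_coeff_of_orthonormal
    (horth : ∀ j k, ∑ i, ψ j i * ψ k i = if j = k then 1 else 0)
    (hg : ∀ i, g i = ∑ k, c k * ψ k i) (l : κ) : ∑ i, g i * ψ l i = c l := by
  simp_rw [hg, Finset.sum_mul, mul_assoc]
  rw [Finset.sum_comm]
  simp [← Finset.mul_sum, horth]

theorem sum_sq_eq_sum_sq_coeff_of_orthonormal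
    (horth : ∀ j k, ∑ i, ψ j i * ψ k i = if j = k then 1 else 0)
    (hg : ∀ i, g i = ∑ k, c k * ψ k i) : ∑ i, g i ^ 2 = ∑ k, c k ^ 2 := by
  calc ∑ i, g i ^ 2 = ∑ i, g i * ∑ k, c k * ψ k i := by simp_rw [sq, ← hg]
    _ = ∑ k, c k * ∑ i, g i * ψ k i := by
        simp_rw [Finset.mul_sum]
        rw [Finset.sum_comm]
        exact Finset.sum_congr rfl fun _ _ => Finset.sum_congr rfl fun _ _ => by ring
    _ = ∑ k, c k ^ 2 := by simp_rw [sum_mul_eq_coeff_of_orthonormal horth hg, sq]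

theorem abs_sum_mul_sub_sum_le (horth : ∀ j k, ∑ i, ψ j i * ψ k i = if j = k then 1 else 0)
    (hg : ∀ i, g i = ∑ k, c k * ψ k i) (u : ι → ℝ) :
    |∑ i, u i * g i - ∑ i, g i|
      ≤ √(∑ k, (∑ i, u i * ψ k i - ∑ i, ψ k i) ^ 2) * √(∑ i, g i ^ 2) := by
  rw [sum_mul_sub_sum_eq_sum_coeff_mul hg, sum_sq_eq_sum_sq_coeff_of_orthonormal horth hg,
    mul_comm, ← Real.sqrt_mul (Finset.sum_nonneg fun _ _ => sq_nonneg _)]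
  exact Real.abs_le_sqrt (Finset.sum_mul_sq_le_sq_mul_sq _ _ _)

end Orthonormal

section WeightedSums

variable {ι : Type*} [Fintype ι]

theorem sum_sq_mul_one_sub_le {u a : ι → ℝ} {ε : ℝ} (hε : 0 ≤ ε)
    (h : |∑ i, u i * a i ^ 2 - ∑ i, a i ^ 2| ≤ ε * √(∑ i, (a i ^ 2) ^ 2)) :
    (∑ i, a i ^ 2) * (1 - ε) ≤ ∑ i, u i * a i ^ 2 := by
  have h4 : √(∑ i, (a i ^ 2) ^ 2) ≤ ∑ i, a i ^ 2 :=
    (Real.sqrt_le_left (Finset.sum_nonneg fun _ _ => sq_nonneg _)).mpr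
      (Finset.sum_sq_le_sq_sum_of_nonneg fun _ _ => sq_nonneg _)
  nlinarith [(abs_le.mp h).1, mul_le_mul_of_nonneg_left h4 hε]

/-- Minimality of `t = 1` along the line `t ↦ t • b` makes `a - b` weighted-orthogonal to `b`
(a nonpositive discriminant), and then Pythagoras applies. -/
theorem sum_mul_sq_le_of_forall_le {u a b : ι → ℝ} (hu : ∀ i, 0 ≤ u i)
    (hmin : ∀ t : ℝ, ∑ i, u i * (a i - b i) ^ 2 ≤ ∑ i, u i * (a i - t * b i) ^ 2) :
    ∑ i, u i * b i ^ 2 ≤ ∑ i, u i * a i ^ 2 := by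
  set U := ∑ i, u i * b i ^ 2
  set G := ∑ i, u i * (a i * b i)
  have hexpand : ∀ t : ℝ, ∑ i, u i * (a i - t * b i) ^ 2
      = ∑ i, u i * a i ^ 2 - 2 * t * G + t ^ 2 * U := by
    intro t
    simp only [U, G, Finset.mul_sum, ← Finset.sum_sub_distrib, ← Finset.sum_add_distrib]
    exact Finset.sum_congr rfl fun _ _ => by ring
  have hexpand_one := hexpand 1
  simp only [one_mul, one_pow, mul_one] at hexpand_one
  have hGU : G = U := by
    have hdisc : discrim U (-2 * G) (2 * G - U) ≤ 0 := discrim_le_zero fun t => by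
      have := hmin t
      rw [hexpand t, hexpand_one] at this
      linarith
    rw [discrim] at hdisc
    nlinarith [sq_nonneg (G - U)]
  have hres : 0 ≤ ∑ i, u i * (a i - b i) ^ 2 :=
    Finset.sum_nonneg fun i _ => mul_nonneg (hu i) (sq_nonneg _)
  rw [hexpand_one, hGU] at hres
  linarith

theorem sum_mul_sq_le_sum_mul_sq_of_abs_le {u a : ι → ℝ} {F : ℝ} (hu : ∀ i, 0 ≤ u i)
    (ha : ∀ i, |a i| ≤ F) : ∑ i, u i * a i ^ 2 ≤ (∑ i, u i) * F ^ 2 := by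
  rw [Finset.sum_mul]
  exact Finset.sum_le_sum fun i _ => mul_le_mul_of_nonneg_left
    (sq_le_sq' (abs_le.mp (ha i)).1 (abs_le.mp (ha i)).2) (hu i)

theorem sup'_abs_le_sqrt_sum_sq (a : ι → ℝ) (h : (Finset.univ : Finset ι).Nonempty) :
    Finset.univ.sup' h (fun i => |a i|) ≤ √(∑ i, a i ^ 2) :=
  Finset.sup'_le _ _ fun i _ => Real.abs_le_sqrt <|
    Finset.single_le_sum (fun j _ => sq_nonneg (a j)) (Finset.mem_univ i)

end WeightedSums

theorem sqrt_le_sqrt_mul_beta {S M ε F : ℝ} (hM : 0 < M) (hε : 0 ≤ ε) (hεM : ε * √M < 1)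
    (hF : 0 ≤ F) (h : S * (1 - ε * √M) ≤ (M + ε * √M) * F ^ 2) :
    √S ≤ √M * (√(1 - ε * √M)⁻¹ * √(1 + ε / √M)) * F := by
  have hsM : 0 < √M := Real.sqrt_pos.mpr hM
  have hden : 0 < 1 - ε * √M := by linarith
  have hMε : M + ε * √M = M * (1 + ε / √M) := by
    field_simp
    linear_combination ε * Real.mul_self_sqrt hM.le
  have hS : S ≤ M * (1 - ε * √M)⁻¹ * (1 + ε / √M) * F ^ 2 := by
    rw [← le_div_iff₀ hden, hMε] at h
    exact h.trans_eq (by field_simp)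
  calc √S ≤ √(M * (1 - ε * √M)⁻¹ * (1 + ε / √M) * F ^ 2) := Real.sqrt_le_sqrt hS
    _ = √M * (√(1 - ε * √M)⁻¹ * √(1 + ε / √M)) * F := by
      rw [Real.sqrt_mul (by positivity), Real.sqrt_mul (by positivity),
        Real.sqrt_mul hM.le, Real.sqrt_sq hF]
      ring

theorem catchls_operator_norm_mesh_general
    (d n M N : ℕ) (hM : 0 < M) (K : Set (Fin d → ℝ)) (C : ℝ)
    (x : Fin M → (Fin d → ℝ)) (hx : ∀ i, x i ∈ K)
    (hmesh : ∀ p : MvPolynomial (Fin d) ℝ, p.totalDegree ≤ n → ∀ y ∈ K,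
      |eval y p| ≤ C * Finset.univ.sup' ⟨⟨0, hM⟩, Finset.mem_univ _⟩
        (fun i => |eval (x i) p|))
    (ψ : Fin N → (Fin M → ℝ))
    (horth : ∀ j k, ∑ i, ψ j i * ψ k i = if j = k then 1 else 0)
    (hspan : ∀ q : MvPolynomial (Fin d) ℝ, q.totalDegree ≤ 2 * n →
      ∃ c : Fin N → ℝ, ∀ i, eval (x i) q = ∑ k, c k * ψ k i)
    (u : Fin M → ℝ) (hu : ∀ i, 0 ≤ u i) (ε : ℝ)
    (hres : Real.sqrt (∑ k, (∑ i, u i * ψ k i - ∑ i, ψ k i) ^ 2) = ε)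
    (hε : ε * Real.sqrt M < 1)
    (f : (Fin d → ℝ) → ℝ)
    (p₀ : MvPolynomial (Fin d) ℝ) (hp₀ : p₀.totalDegree ≤ n)
    (hmin : ∀ q : MvPolynomial (Fin d) ℝ, q.totalDegree ≤ n →
      ∑ i, u i * (f (x i) - eval (x i) p₀) ^ 2
        ≤ ∑ i, u i * (f (x i) - eval (x i) q) ^ 2)
    (F : ℝ) (hF : ∀ y ∈ K, |f y| ≤ F) :
    ∀ y ∈ K, |eval y p₀|
      ≤ C * Real.sqrt M *
          (Real.sqrt (1 - ε * Real.sqrt M)⁻¹ *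
            Real.sqrt (1 + ε / Real.sqrt M)) * F := by
  intro y hy
  have hε0 : 0 ≤ ε := hres ▸ Real.sqrt_nonneg _
  have hC : 0 ≤ C := by
    have h := (hmesh 1 (by simp) y hy).trans_eq
      (congrArg (C * ·) (Finset.sup'_eq_of_forall (a := 1) _ _ fun i _ => by simp))
    simp only [map_one, abs_one, mul_one] at h
    linarith
  have hquadrature : ∀ q : MvPolynomial (Fin d) ℝ, q.totalDegree ≤ 2 * n →
      |∑ i, u i * eval (x i) q - ∑ i, eval (x i) q| ≤ ε * √(∑ i, eval (x i) q ^ 2) := by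
    intro q hq
    obtain ⟨c, hc⟩ := hspan q hq
    exact hres ▸ abs_sum_mul_sub_sum_le horth hc u
  set p : Fin M → ℝ := fun i => eval (x i) p₀
  have hsq : (p₀ ^ 2).totalDegree ≤ 2 * n := (totalDegree_pow _ _).trans (by omega)
  have hnorm : (∑ i, p i ^ 2) * (1 - ε * √M) ≤ ∑ i, u i * p i ^ 2 := by
    refine le_trans ?_ (sum_sq_mul_one_sub_le hε0 (by simpa [p] using hquadrature _ hsq))
    gcongr
    exact le_mul_of_one_le_right hε0 (Real.one_le_sqrt.mpr (by exact_mod_cast hM))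
  have hproj : ∑ i, u i * p i ^ 2 ≤ ∑ i, u i * f (x i) ^ 2 :=
    sum_mul_sq_le_of_forall_le hu fun t => by
      simpa [p] using hmin (MvPolynomial.C t * p₀) ((totalDegree_mul _ _).trans (by simpa))
  have hweights : ∑ i, u i ≤ M + ε * √M := by
    have := (abs_le.mp (hquadrature 1 (by simp))).2
    simp only [map_one, mul_one, Finset.sum_const, Finset.card_univ, Fintype.card_fin,
      nsmul_eq_mul, one_pow] at this
    linarith
  have hdata : ∑ i, u i * f (x i) ^ 2 ≤ (M + ε * √M) * F ^ 2 :=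
    (sum_mul_sq_le_sum_mul_sq_of_abs_le hu fun i => hF _ (hx i)).trans (by gcongr)
  calc |eval y p₀| ≤ C * Finset.univ.sup' _ fun i => |p i| := hmesh p₀ hp₀ y hy
    _ ≤ C * √(∑ i, p i ^ 2) := by gcongr; exact sup'_abs_le_sqrt_sum_sq p _
    _ ≤ C * (√M * (√(1 - ε * √M)⁻¹ * √(1 + ε / √M)) * F) := by
      gcongr
      exact sqrt_le_sqrt_mul_beta (by exact_mod_cast hM) hε0 hε
        ((abs_nonneg _).trans (hF y hy)) (hnorm.trans (hproj.trans hdata))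
    _ = _ := by ring

/-- Proposition 3, first part: if `X_n` is a polynomial mesh of `K` with
constant `C` and cardinality `M`, and `(T_{2n}, w)` (given by the nonzero
entries of `u`) is a near-exact nonnegative formula with moment residual `ε`
(for an orthonormal basis of `P_{2n}^d(X_n)` w.r.t. the counting measure),
`ε√M < 1`, then the weighted least-squares polynomial `p₀` of degree at most
`n` for `f` satisfies `‖p₀‖_{L∞(K)} ≤ C √M β_M(ε) ‖f‖_{L∞(K)}`, where
`β_M(ε) = (1−ε√M)^{-1/2}(1+ε/√M)^{1/2}` and the sup norm of `f` is expressed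
through an arbitrary uniform bound `F`. -/
theorem catchls_operator_norm_mesh
    (d n M N : ℕ) (hM : 0 < M) (K : Set (Fin d → ℝ)) (C : ℝ)
    (x : Fin M → (Fin d → ℝ)) (hx : ∀ i, x i ∈ K)
    (hmesh : ∀ p : MvPolynomial (Fin d) ℝ, p.totalDegree ≤ n → ∀ y ∈ K,
      |eval y p| ≤ C * Finset.univ.sup' ⟨⟨0, hM⟩, Finset.mem_univ _⟩
        (fun i => |eval (x i) p|))
    (ψ : Fin N → (Fin M → ℝ))
    (hψpoly : ∀ k, ∃ q : MvPolynomial (Fin d) ℝ,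
      q.totalDegree ≤ 2 * n ∧ ∀ i, ψ k i = eval (x i) q)
    (horth : ∀ j k, ∑ i, ψ j i * ψ k i = if j = k then 1 else 0)
    (hspan : ∀ q : MvPolynomial (Fin d) ℝ, q.totalDegree ≤ 2 * n →
      ∃ c : Fin N → ℝ, ∀ i, eval (x i) q = ∑ k, c k * ψ k i)
    (u : Fin M → ℝ) (hu : ∀ i, 0 ≤ u i) (ε : ℝ)
    (hres : Real.sqrt (∑ k, (∑ i, u i * ψ k i - ∑ i, ψ k i) ^ 2) = ε)
    (hε : ε * Real.sqrt M < 1)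
    (f : (Fin d → ℝ) → ℝ) (hf : ContinuousOn f K)
    (p₀ : MvPolynomial (Fin d) ℝ) (hp₀ : p₀.totalDegree ≤ n)
    (hmin : ∀ q : MvPolynomial (Fin d) ℝ, q.totalDegree ≤ n →
      ∑ i, u i * (f (x i) - eval (x i) p₀) ^ 2
        ≤ ∑ i, u i * (f (x i) - eval (x i) q) ^ 2)
    (F : ℝ) (hF : ∀ y ∈ K, |f y| ≤ F) :
    ∀ y ∈ K, |eval y p₀|
      ≤ C * Real.sqrt M *
          (Real.sqrt (1 - ε * Real.sqrt M)⁻¹ *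
            Real.sqrt (1 + ε / Real.sqrt M)) * F :=
  catchls_operator_norm_mesh_general d n M N hM K C x hx hmesh ψ horth hspan u hu ε hres hε f p₀ hp₀
    hmin F hF
end
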